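/- arXiv:1509.07171 — 10 statements merged into one kernel-verified Lean document; each statement's English description precedes it below -/
import Mathlib

section
/- Let C be a closed braided monoidal category and A a semigroup in C. Then the multiplication m : A⊗A → A is non-degenerate (i.e. for all objects X, Y the maps C(X, Y⊗A) → C(X⊗A, Y⊗A), f ↦ (1⊗m)∘(f⊗1), and C(X, A⊗Y) → C(A⊗X, A⊗Y), g ↦ (m⊗1)∘(1⊗g), are injective) if and only if for every object Y both canonical morphisms r_Y : A⊗Y → [A, A⊗Y] (the mate of m⊗1 : A⊗A⊗Y → A⊗Y under the adjunction A⊗(−) ⊣ [A,−]) and l_Y : Y⊗A → [A, Y⊗A] (the mate of (1⊗m)∘c_{A,Y⊗A} : A⊗Y⊗A → Y⊗A) are monomorphisms. -/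
open CategoryTheory Category MonoidalCategory Limits

universe v u

variable {C : Type u} [Category.{v} C] [MonoidalCategory C]

/-- A semigroup multiplication is non-degenerate. -/
def NonDeg (A : C) (m : A ⊗ A ⟶ A) : Prop :=
  (∀ X Y : C, Function.Injective (fun f : X ⟶ Y ⊗ A =>
      (f ▷ A) ≫ (α_ Y A A).hom ≫ (Y ◁ m))) ∧
  (∀ X Y : C, Function.Injective (fun g : X ⟶ A ⊗ Y =>
      (A ◁ g) ≫ (α_ A A Y).inv ≫ (m ▷ Y)))

/-- Associativity of a semigroup multiplication. -/
def SgAssoc (A : C) (m : A ⊗ A ⟶ A) : Prop :=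
  (m ▷ A) ≫ m = (α_ A A A).hom ≫ (A ◁ m) ≫ m

/-- A pair (f₁, f₂) is an `𝕄`-morphism `A ⇸ B`: eq. (2). -/
def IsMMor {A B : C} (mB : B ⊗ B ⟶ B) (f₁ : A ⊗ B ⟶ B) (f₂ : B ⊗ A ⟶ B) : Prop :=
  (f₂ ▷ B) ≫ mB = (α_ B A B).hom ≫ (B ◁ f₁) ≫ mB

/-- The first component of an `𝕄`-morphism is multiplicative. -/
def Mult₁ {A B : C} (mA : A ⊗ A ⟶ A) (f₁ : A ⊗ B ⟶ B) : Prop :=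
  (mA ▷ B) ≫ f₁ = (α_ A A B).hom ≫ (A ◁ f₁) ≫ f₁

/-- The second component of an `𝕄`-morphism is multiplicative. -/
def Mult₂ {A B : C} (mA : A ⊗ A ⟶ A) (f₂ : B ⊗ A ⟶ B) : Prop :=
  (α_ B A A).hom ≫ (B ◁ mA) ≫ f₂ = (f₂ ▷ A) ≫ f₂

/-- Mono of a curried map is equivalent to injectivity of whiskered composition. -/
lemma mono_curry_iff [MonoidalClosed C] {A B Z : C} (φ : A ⊗ B ⟶ Z) :
    Mono (MonoidalClosed.curry φ) ↔
      ∀ X : C, Function.Injective (fun g : X ⟶ B => (A ◁ g) ≫ φ) := by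
  constructor
  · intro h X g₁ g₂ hg
    have : g₁ ≫ MonoidalClosed.curry φ = g₂ ≫ MonoidalClosed.curry φ := by
      rw [← MonoidalClosed.curry_natural_left, ← MonoidalClosed.curry_natural_left]
      exact congrArg MonoidalClosed.curry hg
    exact (cancel_mono _).1 this
  · intro h
    constructor
    intro X g₁ g₂ hg
    apply h X
    have := congrArg MonoidalClosed.uncurry hg
    rwa [MonoidalClosed.uncurry_natural_left, MonoidalClosed.uncurry_natural_left,
      MonoidalClosed.uncurry_curry] at this

/-- Lemma 2.2: non-degeneracy of a semigroup in a closed braided monoidal category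
is equivalent to the canonical comparison maps `r_Y` and `l_Y` being monomorphisms. -/
theorem nondeg_iff_mono_comparisons [BraidedCategory C] [MonoidalClosed C]
    {A : C} (m : A ⊗ A ⟶ A) (hA : SgAssoc A m) :
    NonDeg A m ↔
      ∀ Y : C,
        Mono (MonoidalClosed.curry ((α_ A A Y).inv ≫ (m ▷ Y))) ∧
        Mono (MonoidalClosed.curry
          ((β_ A (Y ⊗ A)).hom ≫ (α_ Y A A).hom ≫ (Y ◁ m))) := by
  have key : ∀ (Y X : C) (f₁ f₂ : X ⟶ Y ⊗ A),
      ((A ◁ f₁) ≫ (β_ A (Y ⊗ A)).hom ≫ (α_ Y A A).hom ≫ (Y ◁ m) =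
       (A ◁ f₂) ≫ (β_ A (Y ⊗ A)).hom ≫ (α_ Y A A).hom ≫ (Y ◁ m)) ↔
      ((f₁ ▷ A) ≫ (α_ Y A A).hom ≫ (Y ◁ m) =
       (f₂ ▷ A) ≫ (α_ Y A A).hom ≫ (Y ◁ m)) := by
    intro Y X f₁ f₂
    have nat : ∀ f : X ⟶ Y ⊗ A,
        (A ◁ f) ≫ (β_ A (Y ⊗ A)).hom = (β_ A X).hom ≫ (f ▷ A) := by
      intro f; exact (BraidedCategory.braiding_naturality_right A f)
    have nat' : ∀ f : X ⟶ Y ⊗ A,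
        (A ◁ f) ≫ (β_ A (Y ⊗ A)).hom ≫ (α_ Y A A).hom ≫ (Y ◁ m) =
        (β_ A X).hom ≫ (f ▷ A) ≫ (α_ Y A A).hom ≫ (Y ◁ m) := by
      intro f; rw [← Category.assoc, nat, Category.assoc]
    rw [nat', nat']
    exact ⟨fun hf => (cancel_epi (β_ A X).hom).1 hf, fun hf => by rw [hf]⟩
  constructor
  · rintro ⟨h₁, h₂⟩ Y
    refine ⟨(mono_curry_iff _).2 fun X => h₂ X Y, (mono_curry_iff _).2 fun X f₁ f₂ hf => ?_⟩
    exact h₁ X Y ((key Y X f₁ f₂).1 hf)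
  · intro h
    refine ⟨fun X Y f₁ f₂ hf => ?_, fun X Y => (mono_curry_iff _).1 (h Y).1 X⟩
    exact (mono_curry_iff _).1 (h Y).2 X ((key Y X f₁ f₂).2 hf)
end

section
/- Let B be a non-degenerate semigroup in a monoidal category C and f : A ⇸ B an M-morphism, i.e. a pair (f₁ : A⊗B → B, f₂ : B⊗A → B) satisfying m∘(f₂⊗1) = m∘(1⊗f₁) : B⊗A⊗B → B. Then f₁ is compatible with the right B-action, i.e. f₁∘(1⊗m) = m∘(f₁⊗1) : A⊗B⊗B → B, and f₂ is compatible with the left B-action, i.e. f₂∘(m⊗1) = m∘(1⊗f₂) : B⊗B⊗A → B. -/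
open CategoryTheory Category MonoidalCategory Limits

universe v u

variable {C : Type u} [Category.{v} C] [MonoidalCategory C]

/-- Left cancellation of a non-degenerate multiplication. -/
theorem nondeg_cancel_left {X B : C} (m : B ⊗ B ⟶ B)
    (hnd : ∀ X Y : C, Function.Injective (fun g : X ⟶ B ⊗ Y =>
      (B ◁ g) ≫ (α_ B B Y).inv ≫ (m ▷ Y)))
    (u v : X ⟶ B) (h : (B ◁ u) ≫ m = (B ◁ v) ≫ m) : u = v := by
  have key : ∀ w : X ⟶ B, B ◁ (w ≫ (ρ_ B).inv) ≫ (α_ B B (𝟙_ C)).inv ≫ m ▷ 𝟙_ C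
      = ((B ◁ w) ≫ m) ≫ (ρ_ B).inv := by
    intro w; simp
  have h2 : u ≫ (ρ_ B).inv = v ≫ (ρ_ B).inv := by
    apply hnd X (𝟙_ C)
    show B ◁ (u ≫ (ρ_ B).inv) ≫ (α_ B B (𝟙_ C)).inv ≫ m ▷ 𝟙_ C
       = B ◁ (v ≫ (ρ_ B).inv) ≫ (α_ B B (𝟙_ C)).inv ≫ m ▷ 𝟙_ C
    rw [key, key, h]
  simpa using congrArg (· ≫ (ρ_ B).hom) h2

/-- Right cancellation of a non-degenerate multiplication. -/
theorem nondeg_cancel_right {X B : C} (m : B ⊗ B ⟶ B)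
    (hnd : ∀ X Y : C, Function.Injective (fun f : X ⟶ Y ⊗ B =>
      (f ▷ B) ≫ (α_ Y B B).hom ≫ (Y ◁ m)))
    (u v : X ⟶ B) (h : (u ▷ B) ≫ m = (v ▷ B) ≫ m) : u = v := by
  have key : ∀ w : X ⟶ B, (w ≫ (λ_ B).inv) ▷ B ≫ (α_ (𝟙_ C) B B).hom ≫ 𝟙_ C ◁ m
      = ((w ▷ B) ≫ m) ≫ (λ_ B).inv := by
    intro w; simp
  have h2 : u ≫ (λ_ B).inv = v ≫ (λ_ B).inv := by
    apply hnd X (𝟙_ C)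
    show (u ≫ (λ_ B).inv) ▷ B ≫ (α_ (𝟙_ C) B B).hom ≫ 𝟙_ C ◁ m
       = (v ≫ (λ_ B).inv) ▷ B ≫ (α_ (𝟙_ C) B B).hom ≫ 𝟙_ C ◁ m
    rw [key, key, h]
  simpa using congrArg (· ≫ (λ_ B).hom) h2

/-- Lemma 2.6: the components of an `𝕄`-morphism into a non-degenerate semigroup
are compatible with the right (resp. left) actions, eq. (2.1). -/
theorem mmor_components_are_module_maps {A B : C} (m : B ⊗ B ⟶ B)
    (hassoc : SgAssoc B m) (hnd : NonDeg B m)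
    (f₁ : A ⊗ B ⟶ B) (f₂ : B ⊗ A ⟶ B) (hf : IsMMor m f₁ f₂) :
    ((α_ A B B).hom ≫ (A ◁ m) ≫ f₁ = (f₁ ▷ B) ≫ m) ∧
    ((m ▷ A) ≫ f₂ = (α_ B B A).hom ≫ (B ◁ f₂) ≫ m) := by
  rw [SgAssoc] at hassoc
  rw [IsMMor] at hf
  have hf' : (B ◁ f₁) ≫ m = (α_ B A B).inv ≫ (f₂ ▷ B) ≫ m := by
    rw [hf]; simp
  have hassoc' : (B ◁ m) ≫ m = (α_ B B B).inv ≫ (m ▷ B) ≫ m := by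
    rw [hassoc]; simp
  constructor
  · apply nondeg_cancel_left m hnd.2
    have pent : B ◁ (α_ A B B).hom ≫ (α_ B A (B ⊗ B)).inv ≫ (α_ (B ⊗ A) B B).inv
        = (α_ B (A ⊗ B) B).inv ≫ (α_ B A B).inv ▷ B := by monoidal
    simp only [MonoidalCategory.whiskerLeft_comp, assoc]
    rw [hf']
    slice_lhs 2 3 => rw [associator_inv_naturality_right]
    slice_lhs 3 4 => rw [whisker_exchange]
    slice_rhs 2 3 => rw [hassoc']
    slice_rhs 1 2 => rw [associator_inv_naturality_middle]
    slice_rhs 2 3 => rw [← comp_whiskerRight, hf', comp_whiskerRight, comp_whiskerRight]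
    slice_lhs 4 5 => rw [hassoc']
    slice_lhs 3 4 => rw [associator_inv_naturality_left]
    simp only [assoc]
    rw [reassoc_of% pent]
  · apply nondeg_cancel_right m hnd.1
    have pent : (α_ B B A).hom ▷ B ≫ (α_ B (B ⊗ A) B).hom ≫ B ◁ (α_ B A B).hom
        ≫ (α_ B B (A ⊗ B)).inv = (α_ (B ⊗ B) A B).hom := by monoidal
    simp only [comp_whiskerRight, assoc]
    rw [hf]
    slice_lhs 1 2 => rw [associator_naturality_left]
    slice_rhs 3 4 => rw [hassoc]
    slice_rhs 2 3 => rw [associator_naturality_middle]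
    slice_rhs 3 4 => rw [← MonoidalCategory.whiskerLeft_comp, hf,
      MonoidalCategory.whiskerLeft_comp, MonoidalCategory.whiskerLeft_comp]
    slice_rhs 5 6 => rw [hassoc']
    slice_rhs 4 5 => rw [associator_inv_naturality_right]
    slice_rhs 5 6 => rw [whisker_exchange]
    simp only [assoc]
    rw [reassoc_of% pent]
end

section
/- Let B be a non-degenerate semigroup. If f = (f₁,f₂) and g = (g₁,g₂) are M-morphisms A ⇸ B with f₁ = g₁, then f₂ = g₂ (and symmetrically, f₂ = g₂ implies f₁ = g₁). -/
open CategoryTheory Category MonoidalCategory Limits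

universe v u

variable {C : Type u} [Category.{v} C] [MonoidalCategory C]

/-- Remark 2.5 (first part): each component of an `𝕄`-morphism into a non-degenerate
semigroup determines the other. -/
theorem mmor_component_determines_other {A B : C} (m : B ⊗ B ⟶ B) (hnd : NonDeg B m)
    (f₁ g₁ : A ⊗ B ⟶ B) (f₂ g₂ : B ⊗ A ⟶ B)
    (hf : IsMMor m f₁ f₂) (hg : IsMMor m g₁ g₂) :
    (f₁ = g₁ → f₂ = g₂) ∧ (f₂ = g₂ → f₁ = g₁) := by
  obtain ⟨h1, h2⟩ := hnd
  constructor
  · intro h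
    subst h
    have key : (f₂ ▷ B) ≫ m = (g₂ ▷ B) ≫ m := hf.trans hg.symm
    have inj := h1 (B ⊗ A) (𝟙_ C)
    have e1 : ∀ (x : B ⊗ A ⟶ B),
        ((x ≫ (λ_ B).inv) ▷ B) ≫ (α_ (𝟙_ C) B B).hom ≫ ((𝟙_ C) ◁ m)
          = (x ▷ B) ≫ m ≫ (λ_ B).inv := by
      intro x
      simp [comp_whiskerRight, ← leftUnitor_inv_naturality]
    have := inj (a₁ := f₂ ≫ (λ_ B).inv) (a₂ := g₂ ≫ (λ_ B).inv)
      (by simp only [e1, ← Category.assoc, key])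
    simpa using this
  · intro h
    subst h
    have key : (B ◁ f₁) ≫ m = (B ◁ g₁) ≫ m := by
      have := hf.symm.trans hg
      rwa [← cancel_epi (α_ B A B).hom]
    have inj := h2 (A ⊗ B) (𝟙_ C)
    have e1 : ∀ (x : A ⊗ B ⟶ B),
        (B ◁ (x ≫ (ρ_ B).inv)) ≫ (α_ B B (𝟙_ C)).inv ≫ (m ▷ (𝟙_ C))
          = (B ◁ x) ≫ m ≫ (ρ_ B).inv := by
      intro x
      simp [MonoidalCategory.whiskerLeft_comp, ← rightUnitor_inv_naturality]
    have := inj (a₁ := f₁ ≫ (ρ_ B).inv) (a₂ := g₁ ≫ (ρ_ B).inv)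
      (by simp only [e1, ← Category.assoc, key])
    simpa using this
end

section
/- Let A be a semigroup and B a non-degenerate semigroup, and f = (f₁,f₂) : A ⇸ B an M-morphism. If f₁ is multiplicative, i.e. f₁∘(m_A⊗1) = f₁∘(1⊗f₁) : A⊗A⊗B → B, then f₂ is multiplicative, i.e. f₂∘(1⊗m_A) = f₂∘(f₂⊗1) : B⊗A⊗A → B, and conversely. -/
open CategoryTheory Category MonoidalCategory Limits

universe v u

variable {C : Type u} [Category.{v} C] [MonoidalCategory C]

lemma nondeg_right {B : C} {m : B ⊗ B ⟶ B} (hnd : NonDeg B m) (X : C)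
    {h h' : X ⟶ B} (heq : (h ▷ B) ≫ m = (h' ▷ B) ≫ m) : h = h' := by
  have key : ((λ_ B).inv ▷ B) ≫ (α_ (𝟙_ C) B B).hom ≫ ((𝟙_ C) ◁ m) = m ≫ (λ_ B).inv := by
    have h : ((𝟙_ C) ◁ m) = (λ_ (B ⊗ B)).hom ≫ m ≫ (λ_ B).inv := by
      rw [← leftUnitor_naturality_assoc]; simp
    rw [h]; coherence
  have := hnd.1 X (𝟙_ C) (a₁ := h ≫ (λ_ B).inv) (a₂ := h' ≫ (λ_ B).inv) (by
    simp only [comp_whiskerRight, assoc, key, reassoc_of% heq])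
  simpa using congrArg (· ≫ (λ_ B).hom) this

lemma nondeg_left {B : C} {m : B ⊗ B ⟶ B} (hnd : NonDeg B m) (X : C)
    {h h' : X ⟶ B} (heq : (B ◁ h) ≫ m = (B ◁ h') ≫ m) : h = h' := by
  have key : (B ◁ (ρ_ B).inv) ≫ (α_ B B (𝟙_ C)).inv ≫ (m ▷ (𝟙_ C)) = m ≫ (ρ_ B).inv := by
    have h : (m ▷ (𝟙_ C)) = (ρ_ (B ⊗ B)).hom ≫ m ≫ (ρ_ B).inv := by
      rw [← rightUnitor_naturality_assoc]; simp
    rw [h]; coherence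
  have := hnd.2 X (𝟙_ C) (a₁ := h ≫ (ρ_ B).inv) (a₂ := h' ≫ (ρ_ B).inv) (by
    simp only [MonoidalCategory.whiskerLeft_comp, assoc, key, reassoc_of% heq])
  simpa using congrArg (· ≫ (ρ_ B).hom) this

/-- Remark 2.5 (second part): for an `𝕄`-morphism between semigroups with `B`
non-degenerate, multiplicativity of one component is equivalent to that of the other. -/
theorem mmor_mult_iff_mult {A B : C} (mA : A ⊗ A ⟶ A) (m : B ⊗ B ⟶ B)
    (hA : SgAssoc A mA) (hB : SgAssoc B m) (hnd : NonDeg B m)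
    (f₁ : A ⊗ B ⟶ B) (f₂ : B ⊗ A ⟶ B) (hf : IsMMor m f₁ f₂) :
    Mult₁ mA f₁ ↔ Mult₂ mA f₂ := by
  constructor
  · intro h1
    unfold IsMMor at hf; unfold Mult₁ at h1; unfold Mult₂
    apply nondeg_right hnd
    simp only [comp_whiskerRight, assoc]
    rw [hf]
    rw [associator_naturality_middle_assoc, ← MonoidalCategory.whiskerLeft_comp_assoc, h1,
      associator_naturality_left_assoc, ← whisker_exchange_assoc, hf,
      associator_naturality_right_assoc]
    simp only [MonoidalCategory.whiskerLeft_comp, assoc]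
    coherence
  · intro h2
    unfold IsMMor at hf; unfold Mult₂ at h2; unfold Mult₁
    have hf' : (B ◁ f₁) ≫ m = (α_ B A B).inv ≫ (f₂ ▷ B) ≫ m := by
      rw [hf]; simp
    have h2' : (B ◁ mA) ≫ f₂ = (α_ B A A).inv ≫ (f₂ ▷ A) ≫ f₂ := by
      rw [← h2]; simp
    apply nondeg_left hnd
    simp only [MonoidalCategory.whiskerLeft_comp, assoc]
    rw [hf']
    rw [associator_inv_naturality_middle_assoc, ← comp_whiskerRight_assoc, h2',
      associator_inv_naturality_right_assoc, whisker_exchange_assoc, hf',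
      associator_inv_naturality_left_assoc]
    simp only [comp_whiskerRight, assoc]
    coherence
end

section
/- Let A be a non-degenerate semigroup in a closed braided monoidal category C, and suppose the pullback M(A) of φ, ψ : [A,A] → [A⊗A, A] exists (where φ corresponds to m∘(1⊗ε) : A⊗A⊗[A,A] → A and ψ to m∘(ε⊗1)∘(1⊗c) : A⊗A⊗[A,A] → A under the tensor-hom adjunction). Then M(A) carries the structure of a (unital) monoid in C, with multiplication determined componentwise by e₁∘(1⊗e₁) and e₂∘(e₂⊗1) and unit corresponding to the identity of A, where e = (e₁ : M(A)⊗A → A, e₂ : A⊗M(A) → A) is the universal M-morphism. -/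
open CategoryTheory Category MonoidalCategory Limits

universe v u

variable {C : Type u} [Category.{v} C] [MonoidalCategory C]

/-- The multiplier monoid `𝕄(A)` of a non-degenerate semigroup `A`, presented by its
universal property: morphisms `X ⟶ 𝕄(A)` correspond bijectively to `𝕄`-morphisms
`X ⇸ A` (Paragraph 2.7, via the pullback of `φ` and `ψ`). -/
structure MultiplierMonoid {C : Type u} [Category.{v} C] [MonoidalCategory C]
    (A : C) (m : A ⊗ A ⟶ A) where
  M : C
  e₁ : M ⊗ A ⟶ A
  e₂ : A ⊗ M ⟶ A
  compat : IsMMor m e₁ e₂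
  lift : ∀ {X : C} (f₁ : X ⊗ A ⟶ A) (f₂ : A ⊗ X ⟶ A), IsMMor m f₁ f₂ →
      ∃! f : X ⟶ M, f₁ = (f ▷ A) ≫ e₁ ∧ f₂ = (A ◁ f) ≫ e₂

section Aux

variable {A : C} {m : A ⊗ A ⟶ A}

/-- Composing a morphism into `𝕄(A)` with the universal `𝕄`-morphism gives an
`𝕄`-morphism. -/
theorem MultiplierMonoid.isMMor_comp (M : MultiplierMonoid A m) {X : C} (g : X ⟶ M.M) :
    IsMMor m ((g ▷ A) ≫ M.e₁) ((A ◁ g) ≫ M.e₂) := by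
  have hc : (M.e₂ ▷ A) ≫ m = (α_ A M.M A).hom ≫ (A ◁ M.e₁) ≫ m := M.compat
  show _ = _
  simp only [comp_whiskerRight, MonoidalCategory.whiskerLeft_comp, assoc]
  rw [hc, associator_naturality_middle_assoc]

/-- Morphisms into `𝕄(A)` are determined by their two components. -/
theorem MultiplierMonoid.hom_ext (M : MultiplierMonoid A m) {X : C} (g h : X ⟶ M.M)
    (h1 : (g ▷ A) ≫ M.e₁ = (h ▷ A) ≫ M.e₁)
    (h2 : (A ◁ g) ≫ M.e₂ = (A ◁ h) ≫ M.e₂) : g = h := by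
  obtain ⟨f, -, huniq⟩ := M.lift _ _ (M.isMMor_comp g)
  exact (huniq g ⟨rfl, rfl⟩).trans (huniq h ⟨h1, h2⟩).symm

end Aux

/-- Proposition 2.8 (i): the multiplier monoid `𝕄(A)` of a non-degenerate semigroup in a
closed braided monoidal category carries the structure of a unital monoid, with
multiplication determined componentwise by `e₁ ∘ (1 ⊗ e₁)` and `e₂ ∘ (e₂ ⊗ 1)` and with
unit corresponding to the identity of `A`. -/
theorem multiplierMonoid_monoid [BraidedCategory C] [MonoidalClosed C]
    {A : C} (m : A ⊗ A ⟶ A) (hassoc : SgAssoc A m) (hnd : NonDeg A m)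
    (M : MultiplierMonoid A m) :
    ∃ (mM : M.M ⊗ M.M ⟶ M.M) (u : 𝟙_ C ⟶ M.M),
      ((mM ▷ A) ≫ M.e₁ = (α_ M.M M.M A).hom ≫ (M.M ◁ M.e₁) ≫ M.e₁) ∧
      ((A ◁ mM) ≫ M.e₂ = (α_ A M.M M.M).inv ≫ (M.e₂ ▷ M.M) ≫ M.e₂) ∧
      ((λ_ A).inv ≫ (u ▷ A) ≫ M.e₁ = 𝟙 A) ∧
      ((ρ_ A).inv ≫ (A ◁ u) ≫ M.e₂ = 𝟙 A) ∧
      SgAssoc M.M mM ∧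
      ((λ_ M.M).inv ≫ (u ▷ M.M) ≫ mM = 𝟙 M.M) ∧
      ((ρ_ M.M).inv ≫ (M.M ◁ u) ≫ mM = 𝟙 M.M) := by
  have hc : (M.e₂ ▷ A) ≫ m = (α_ A M.M A).hom ≫ (A ◁ M.e₁) ≫ m := M.compat
  -- the multiplication
  obtain ⟨mM, ⟨hm₁, hm₂⟩, -⟩ := M.lift
    ((α_ M.M M.M A).hom ≫ (M.M ◁ M.e₁) ≫ M.e₁)
    ((α_ A M.M M.M).inv ≫ (M.e₂ ▷ M.M) ≫ M.e₂) (by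
      show _ = _
      simp only [comp_whiskerRight, MonoidalCategory.whiskerLeft_comp, assoc]
      rw [hc, associator_naturality_left_assoc, ← whisker_exchange_assoc, hc,
        associator_naturality_right_assoc]
      coherence)
  -- the unit
  obtain ⟨u, ⟨hu₁, hu₂⟩, -⟩ := M.lift (λ_ A).hom (ρ_ A).hom (by
    show _ = _
    coherence)
  refine ⟨mM, u, hm₁.symm, hm₂.symm, by rw [← hu₁]; simp, by rw [← hu₂]; simp, ?_, ?_, ?_⟩
  · -- associativity
    refine M.hom_ext _ _ ?_ ?_
    · simp only [comp_whiskerRight, assoc, ← hm₁]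
      conv_lhs => rw [associator_naturality_left_assoc, ← whisker_exchange_assoc, ← hm₁,
        associator_naturality_right_assoc]
      conv_rhs => rw [associator_naturality_middle_assoc,
        ← MonoidalCategory.whiskerLeft_comp_assoc, ← hm₁]
      simp only [MonoidalCategory.whiskerLeft_comp, assoc]
      coherence
    · simp only [MonoidalCategory.whiskerLeft_comp, assoc, ← hm₂]
      conv_lhs => rw [associator_inv_naturality_middle_assoc, ← comp_whiskerRight_assoc, ← hm₂]
      conv_rhs => rw [associator_inv_naturality_right_assoc, whisker_exchange_assoc, ← hm₂,
        associator_inv_naturality_left_assoc]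
      simp only [comp_whiskerRight, assoc]
      coherence
  · -- left unit law
    refine M.hom_ext _ _ ?_ ?_
    · simp only [comp_whiskerRight, assoc, ← hm₁, id_whiskerRight, id_comp]
      rw [associator_naturality_left_assoc, ← whisker_exchange_assoc, ← hu₁]
      simp
    · simp only [MonoidalCategory.whiskerLeft_comp, assoc, ← hm₂]
      rw [associator_inv_naturality_middle_assoc, ← comp_whiskerRight_assoc, ← hu₂]
      simp
  · -- right unit law
    refine M.hom_ext _ _ ?_ ?_
    · simp only [comp_whiskerRight, assoc, ← hm₁, id_whiskerRight, id_comp]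
      rw [associator_naturality_middle_assoc, ← MonoidalCategory.whiskerLeft_comp_assoc, ← hu₁]
      simp
    · simp only [MonoidalCategory.whiskerLeft_comp, assoc, ← hm₂]
      rw [associator_inv_naturality_right_assoc, whisker_exchange_assoc, ← hu₂]
      simp
end

section
/- Let f : A ⇸ B and g : B ⇸ C be M-morphisms with g dense and multiplicative, where C is a non-degenerate semigroup. Then for any morphism s : X → B⊗C in the category, the composite g₁∘(f₁⊗1)∘(1⊗s) : A⊗X → C depends on s only through g₁∘s; i.e. if g₁∘s = g₁∘s' then g₁∘(f₁⊗1)∘(1⊗s) = g₁∘(f₁⊗1)∘(1⊗s'). -/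
open CategoryTheory Category MonoidalCategory Limits

universe v u

variable {C : Type u} [Category.{v} C] [MonoidalCategory C]

/-- The standing assumptions on the class `Q` of regular epimorphisms. -/
structure QData (C : Type u) [Category.{v} C] [MonoidalCategory C] where
  Q : MorphismProperty C
  regEpi : ∀ ⦃X Y : C⦄ (f : X ⟶ Y), Q f → Nonempty (RegularEpi f)
  comp_mem : ∀ ⦃X Y Z : C⦄ (f : X ⟶ Y) (g : Y ⟶ Z), Q f → Q g → Q (f ≫ g)
  tensor_mem : ∀ ⦃X Y X' Y' : C⦄ (f : X ⟶ Y) (g : X' ⟶ Y'), Q f → Q g → Q (f ⊗ₘ g)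
  iso_mem : ∀ ⦃X Y : C⦄ (f : X ⟶ Y), IsIso f → Q f
  cancel : ∀ ⦃X Y Z : C⦄ (s : X ⟶ Y) (t : Y ⟶ Z), Q s → Q (s ≫ t) → Q t
  coeq : ∀ ⦃X Y : C⦄ (f : X ⟶ Y), Q f →
    ∃ (Z : C) (u v : Z ⟶ X) (h : u ≫ f = v ≫ f),
      Nonempty (IsColimit (Cofork.ofπ f h)) ∧
      (∀ W : C, Nonempty (IsColimit (Cofork.ofπ (f := W ◁ u) (g := W ◁ v) (W ◁ f)
        (by rw [← MonoidalCategory.whiskerLeft_comp, ← MonoidalCategory.whiskerLeft_comp, h])))) ∧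
      (∀ W : C, Nonempty (IsColimit (Cofork.ofπ (f := u ▷ W) (g := v ▷ W) (f ▷ W)
        (by rw [← MonoidalCategory.comp_whiskerRight, ← MonoidalCategory.comp_whiskerRight, h]))))

/-!
Multiply the composite on the left by `C` and precompose with `g₂ ▷ (A ⊗ X)`, an epimorphism
since `g₂` is dense. The `𝕄`-law of `g` moves the `B`-factor onto the composite as `B ◁ -`
followed by `g₁`; multiplicativity of `g₁` turns this into a product in `B`, where the `𝕄`-law
of `f` trades `f₁` for `f₂`, after which `s` enters only through `s ≫ g₁`. Cancelling the
epimorphism and then the left multiplication (non-degeneracy of `C`) gives the claim.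
-/

lemma QData.epi_whiskerRight (QD : QData C) {X Y : C} {f : X ⟶ Y} (hf : QD.Q f) (W : C) :
    Epi (f ▷ W) := by
  obtain ⟨_, _, _, _, -, -, hcoeq⟩ := QD.coeq f hf
  obtain ⟨hcol⟩ := hcoeq W
  exact ⟨fun _ _ h => Cofork.IsColimit.hom_ext hcol h⟩

lemma NonDeg.cancel_left_mul {M : C} {m : M ⊗ M ⟶ M} (hnd : NonDeg M m) {Y : C}
    {p q : Y ⟶ M} (h : (M ◁ p) ≫ m = (M ◁ q) ≫ m) : p = q := by
  have unitor_eq : ∀ r : Y ⟶ M,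
      (M ◁ (r ≫ (ρ_ M).inv)) ≫ (α_ M M (𝟙_ C)).inv ≫ (m ▷ 𝟙_ C) =
        ((M ◁ r) ≫ m) ≫ (ρ_ M).inv := fun r => by monoidal
  have := hnd.2 Y (𝟙_ C) (a₁ := p ≫ (ρ_ M).inv) (a₂ := q ≫ (ρ_ M).inv)
    (by simp only [unitor_eq, h])
  simpa using this =≫ (ρ_ M).hom

lemma IsMMor.whiskerRight_comp_whiskerLeft_comp_mul {A B Y : C} {mB : B ⊗ B ⟶ B}
    {f₁ : A ⊗ B ⟶ B} {f₂ : B ⊗ A ⟶ B} (hf : IsMMor mB f₁ f₂) (h : Y ⟶ B) :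
    (f₂ ▷ Y) ≫ (B ◁ h) ≫ mB = (α_ B A Y).hom ≫ (B ◁ ((A ◁ h) ≫ f₁)) ≫ mB := by
  calc (f₂ ▷ Y) ≫ (B ◁ h) ≫ mB
      = ((B ⊗ A) ◁ h) ≫ (f₂ ▷ B) ≫ mB := by rw [← whisker_exchange_assoc]
    _ = ((B ⊗ A) ◁ h) ≫ (α_ B A B).hom ≫ (B ◁ f₁) ≫ mB := by rw [hf]
    _ = (α_ B A Y).hom ≫ (B ◁ ((A ◁ h) ≫ f₁)) ≫ mB := by simp

def actVia {A B Cc X : C} (f₁ : A ⊗ B ⟶ B) (g₁ : B ⊗ Cc ⟶ Cc) (s : X ⟶ B ⊗ Cc) :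
    A ⊗ X ⟶ Cc :=
  (A ◁ s) ≫ (α_ A B Cc).inv ≫ (f₁ ▷ Cc) ≫ g₁

lemma Mult₁.whiskerLeft_actVia_comp {A B Cc X : C} {mB : B ⊗ B ⟶ B} {f₁ : A ⊗ B ⟶ B}
    {f₂ : B ⊗ A ⟶ B} (hf : IsMMor mB f₁ f₂) {g₁ : B ⊗ Cc ⟶ Cc} (hm₁ : Mult₁ mB g₁)
    (t : X ⟶ B ⊗ Cc) :
    (B ◁ actVia f₁ g₁ t) ≫ g₁ = (α_ B A X).inv ≫ (f₂ ▷ X) ≫ (B ◁ (t ≫ g₁)) ≫ g₁ := by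
  have hm₁' : (B ◁ g₁) ≫ g₁ = (α_ B B Cc).inv ≫ (mB ▷ Cc) ≫ g₁ := by
    rw [hm₁]; simp
  calc (B ◁ actVia f₁ g₁ t) ≫ g₁
      = (B ◁ A ◁ t) ≫ (α_ B A (B ⊗ Cc)).inv ≫ (α_ (B ⊗ A) B Cc).inv ≫
          ((α_ B A B).hom ▷ Cc) ≫ (((B ◁ f₁) ≫ mB) ▷ Cc) ≫ g₁ := by
        simp only [actVia, MonoidalCategory.whiskerLeft_comp, assoc, hm₁']
        monoidal
    _ = (B ◁ A ◁ t) ≫ (α_ B A (B ⊗ Cc)).inv ≫ (α_ (B ⊗ A) B Cc).inv ≫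
          ((f₂ ▷ B) ▷ Cc) ≫ (mB ▷ Cc) ≫ g₁ := by
        rw [← comp_whiskerRight_assoc, ← hf, comp_whiskerRight_assoc]
    _ = (α_ B A X).inv ≫ (f₂ ▷ X) ≫ (B ◁ (t ≫ g₁)) ≫ g₁ := by
        rw [hm₁, MonoidalCategory.whiskerLeft_comp_assoc, ← whisker_exchange_assoc]
        monoidal

theorem composite_depends_only_on_general (QD : QData C) {A B Cc X : C}
    (mB : B ⊗ B ⟶ B) (mC : Cc ⊗ Cc ⟶ Cc)
    (hnd : NonDeg Cc mC)
    (f₁ : A ⊗ B ⟶ B) (f₂ : B ⊗ A ⟶ B) (hf : IsMMor mB f₁ f₂)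
    (g₁ : B ⊗ Cc ⟶ Cc) (g₂ : Cc ⊗ B ⟶ Cc) (hg : IsMMor mC g₁ g₂)
    (hd₂ : QD.Q g₂)
    (hm₁ : Mult₁ mB g₁)
    (s s' : X ⟶ B ⊗ Cc) (hs : s ≫ g₁ = s' ≫ g₁) :
    (A ◁ s) ≫ (α_ A B Cc).inv ≫ (f₁ ▷ Cc) ≫ g₁ =
      (A ◁ s') ≫ (α_ A B Cc).inv ≫ (f₁ ▷ Cc) ≫ g₁ := by
  change actVia f₁ g₁ s = actVia f₁ g₁ s'
  apply hnd.cancel_left_mul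
  have := QD.epi_whiskerRight hd₂ (A ⊗ X)
  rw [← cancel_epi (g₂ ▷ (A ⊗ X)), hg.whiskerRight_comp_whiskerLeft_comp_mul,
    hg.whiskerRight_comp_whiskerLeft_comp_mul, hm₁.whiskerLeft_actVia_comp hf,
    hm₁.whiskerLeft_actVia_comp hf, hs]

/-- Lemma 3.1: given an `𝕄`-morphism `f : A ⇸ B` and a dense multiplicative
`𝕄`-morphism `g : B ⇸ C` (with `C` non-degenerate), the composite
`g₁ ∘ (f₁ ⊗ 1) ∘ (1 ⊗ s)` depends on `s : X ⟶ B ⊗ C` only through `g₁ ∘ s`. -/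
theorem composite_depends_only_on (QD : QData C) {A B Cc X : C}
    (mB : B ⊗ B ⟶ B) (mC : Cc ⊗ Cc ⟶ Cc)
    (hB : SgAssoc B mB) (hC : SgAssoc Cc mC) (hnd : NonDeg Cc mC)
    (f₁ : A ⊗ B ⟶ B) (f₂ : B ⊗ A ⟶ B) (hf : IsMMor mB f₁ f₂)
    (g₁ : B ⊗ Cc ⟶ Cc) (g₂ : Cc ⊗ B ⟶ Cc) (hg : IsMMor mC g₁ g₂)
    (hd₁ : QD.Q g₁) (hd₂ : QD.Q g₂)
    (hm₁ : Mult₁ mB g₁) (hm₂ : Mult₂ mB g₂)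
    (s s' : X ⟶ B ⊗ Cc) (hs : s ≫ g₁ = s' ≫ g₁) :
    (A ◁ s) ≫ (α_ A B Cc).inv ≫ (f₁ ▷ Cc) ≫ g₁ =
      (A ◁ s') ≫ (α_ A B Cc).inv ≫ (f₁ ▷ Cc) ≫ g₁ :=
  composite_depends_only_on_general QD mB mC hnd f₁ f₂ hf g₁ g₂ hg hd₂ hm₁ s s' hs
end

section
/- Let f : A ⇸ B be an M-morphism and g : B ⇸ C a dense multiplicative M-morphism (with C non-degenerate). Then there exists a unique M-morphism g∙f : A ⇸ C such that (g∙f)₁∘(1⊗g₁) = g₁∘(f₁⊗1) : A⊗B⊗C → C and (g∙f)₂∘(g₂⊗1) = g₂∘(1⊗f₂) : C⊗B⊗A → C. Moreover g∙f is dense if f is dense, and multiplicative if f is multiplicative. -/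
open CategoryTheory Category MonoidalCategory Limits

universe v u

variable {C : Type u} [Category.{v} C] [MonoidalCategory C]

/-!
The whiskered maps `A ◁ g₁` and `g₂ ▷ A` lie in `Q`, hence are coequalizers, and `p₁`, `p₂` are
obtained by descending `(a, b, c) ↦ f₁(a, b) · c` along `A ◁ g₁` and `(c, b, a) ↦ c · f₂(b, a)`
along `g₂ ▷ A`. To see that these maps descend, act on them once more by `B`: multiplicativity
of `g` and the `𝕄`-property of `f` give `b · (f₁(a, b') · c) = f₂(b, a) · (b' · c)`, while
density of `g` and non-degeneracy of `C` make the action of `B` faithful on maps into `C`.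
Uniqueness, the `𝕄`-property, density and multiplicativity of `p` then follow by cancelling the
epimorphisms `A ◁ g₁` and `g₂ ▷ A`.
-/

namespace QData

variable (QD : QData C)

lemma epi_of_mem {X Y : C} {f : X ⟶ Y} (hf : QD.Q f) : Epi f :=
  let ⟨h⟩ := QD.regEpi f hf
  RegularEpi.epi f h

lemma whiskerLeft_mem (W : C) {X Y : C} {f : X ⟶ Y} (hf : QD.Q f) : QD.Q (W ◁ f) := by
  simpa using QD.tensor_mem (𝟙 W) f (QD.iso_mem _ inferInstance) hf

lemma whiskerRight_mem {X Y : C} {f : X ⟶ Y} (hf : QD.Q f) (W : C) : QD.Q (f ▷ W) := by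
  simpa using QD.tensor_mem f (𝟙 W) hf (QD.iso_mem _ inferInstance)

lemma exists_whiskerLeft_comp_eq {X Y T : C} {g : X ⟶ Y} (hg : QD.Q g) (W : C)
    (h : W ⊗ X ⟶ T) (hh : ∀ ⦃Z : C⦄ (x y : Z ⟶ X), x ≫ g = y ≫ g → (W ◁ x) ≫ h = (W ◁ y) ≫ h) :
    ∃ p : W ⊗ Y ⟶ T, (W ◁ g) ≫ p = h := by
  obtain ⟨Z, u, v, huv, -, hL, -⟩ := QD.coeq g hg
  obtain ⟨hc⟩ := hL W
  exact ⟨Cofork.IsColimit.desc hc h (hh u v huv), Cofork.IsColimit.π_desc' hc _ _⟩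

lemma exists_whiskerRight_comp_eq {X Y T : C} {g : X ⟶ Y} (hg : QD.Q g) (W : C)
    (h : X ⊗ W ⟶ T) (hh : ∀ ⦃Z : C⦄ (x y : Z ⟶ X), x ≫ g = y ≫ g → (x ▷ W) ≫ h = (y ▷ W) ≫ h) :
    ∃ p : Y ⊗ W ⟶ T, (g ▷ W) ≫ p = h := by
  obtain ⟨Z, u, v, huv, -, -, hR⟩ := QD.coeq g hg
  obtain ⟨hc⟩ := hR W
  exact ⟨Cofork.IsColimit.desc hc h (hh u v huv), Cofork.IsColimit.π_desc' hc _ _⟩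

end QData

section NonDeg

variable {A : C} {m : A ⊗ A ⟶ A}

lemma NonDeg.eq_of_whiskerRight_comp_eq (hnd : NonDeg A m) {X : C} {x y : X ⟶ A}
    (h : (x ▷ A) ≫ m = (y ▷ A) ≫ m) : x = y := by
  have hunit : ∀ z : X ⟶ A, ((z ≫ (λ_ A).inv) ▷ A) ≫ (α_ (𝟙_ C) A A).hom ≫ (𝟙_ C ◁ m)
      = (z ▷ A) ≫ m ≫ (λ_ A).inv := fun z => by simp
  have := hnd.1 X (𝟙_ C) (a₁ := x ≫ (λ_ A).inv) (a₂ := y ≫ (λ_ A).inv)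
    (by simp only [hunit]; rw [reassoc_of% h])
  simpa using this =≫ (λ_ A).hom

lemma NonDeg.eq_of_whiskerLeft_comp_eq (hnd : NonDeg A m) {X : C} {x y : X ⟶ A}
    (h : (A ◁ x) ≫ m = (A ◁ y) ≫ m) : x = y := by
  have hunit : ∀ z : X ⟶ A, (A ◁ (z ≫ (ρ_ A).inv)) ≫ (α_ A A (𝟙_ C)).inv ≫ (m ▷ 𝟙_ C)
      = (A ◁ z) ≫ m ≫ (ρ_ A).inv := fun z => by simp
  have := hnd.2 X (𝟙_ C) (a₁ := x ≫ (ρ_ A).inv) (a₂ := y ≫ (ρ_ A).inv)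
    (by simp only [hunit]; rw [reassoc_of% h])
  simpa using this =≫ (ρ_ A).hom

end NonDeg

section IsMMor

variable {A B : C} {mB : B ⊗ B ⟶ B} {f₁ : A ⊗ B ⟶ B} {f₂ : B ⊗ A ⟶ B}

lemma IsMMor.eq_of_whiskerLeft_comp_fst_eq (hnd : NonDeg B mB) (hf : IsMMor mB f₁ f₂)
    {X : C} [Epi (f₂ ▷ X)] {x y : X ⟶ B} (h : (A ◁ x) ≫ f₁ = (A ◁ y) ≫ f₁) : x = y := by
  have key : ∀ z : X ⟶ B,
      (f₂ ▷ X) ≫ (B ◁ z) ≫ mB = (α_ B A X).hom ≫ (B ◁ ((A ◁ z) ≫ f₁)) ≫ mB := by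
    intro z
    rw [← whisker_exchange_assoc, hf]
    simp
  apply hnd.eq_of_whiskerLeft_comp_eq
  rw [← cancel_epi (f₂ ▷ X), key, key, h]

lemma IsMMor.eq_of_whiskerRight_comp_snd_eq (hnd : NonDeg B mB) (hf : IsMMor mB f₁ f₂)
    {X : C} [Epi (X ◁ f₁)] {x y : X ⟶ B} (h : (x ▷ A) ≫ f₂ = (y ▷ A) ≫ f₂) : x = y := by
  have key : ∀ z : X ⟶ B,
      (α_ X A B).hom ≫ (X ◁ f₁) ≫ (z ▷ B) ≫ mB = (((z ▷ A) ≫ f₂) ▷ B) ≫ mB := by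
    intro z
    have hf' : (B ◁ f₁) ≫ mB = (α_ B A B).inv ≫ (f₂ ▷ B) ≫ mB := by rw [hf]; simp
    rw [whisker_exchange_assoc, hf', associator_inv_naturality_left_assoc]
    simp
  apply hnd.eq_of_whiskerRight_comp_eq
  rw [← cancel_epi (X ◁ f₁), ← cancel_epi (α_ X A B).hom, key, key, h]

end IsMMor

lemma epi_whiskerRight_whiskerRight {X Y : C} (g : X ⟶ Y) [∀ W, Epi (g ▷ W)] (V W : C) :
    Epi ((g ▷ V) ▷ W) := by
  rw [show (g ▷ V) ▷ W = (α_ X V W).hom ≫ g ▷ (V ⊗ W) ≫ (α_ Y V W).inv by simp]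
  infer_instance

section Composite

variable {A B Cc : C} {mA : A ⊗ A ⟶ A} {mB : B ⊗ B ⟶ B} {mC : Cc ⊗ Cc ⟶ Cc}
  {f₁ : A ⊗ B ⟶ B} {f₂ : B ⊗ A ⟶ B} {g₁ : B ⊗ Cc ⟶ Cc} {g₂ : Cc ⊗ B ⟶ Cc}

lemma IsMMor.exchange₁ (hf : IsMMor mB f₁ f₂) (hm : Mult₁ mB g₁) :
    (B ◁ ((α_ A B Cc).inv ≫ (f₁ ▷ Cc) ≫ g₁)) ≫ g₁
      = (α_ B A (B ⊗ Cc)).inv ≫ ((B ⊗ A) ◁ g₁) ≫ (f₂ ▷ Cc) ≫ g₁ := by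
  have hm' : (B ◁ g₁) ≫ g₁ = (α_ B B Cc).inv ≫ (mB ▷ Cc) ≫ g₁ := by rw [hm]; simp
  have hf' : (B ◁ f₁) ≫ mB = (α_ B A B).inv ≫ (f₂ ▷ B) ≫ mB := by rw [hf]; simp
  simp only [MonoidalCategory.whiskerLeft_comp, assoc]
  rw [hm', associator_inv_naturality_middle_assoc, ← comp_whiskerRight_assoc, hf']
  simp only [MonoidalCategory.comp_whiskerRight, assoc]
  rw [hm, associator_naturality_left_assoc, ← whisker_exchange_assoc]
  monoidal

lemma IsMMor.exchange₂ (hf : IsMMor mB f₁ f₂) (hm : Mult₂ mB g₂) :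
    (((α_ Cc B A).hom ≫ (Cc ◁ f₂) ≫ g₂) ▷ B) ≫ g₂
      = (α_ (Cc ⊗ B) A B).hom ≫ (g₂ ▷ (A ⊗ B)) ≫ (Cc ◁ f₁) ≫ g₂ := by
  have hm' : (Cc ◁ mB) ≫ g₂ = (α_ Cc B B).inv ≫ (g₂ ▷ B) ≫ g₂ := by rw [← hm]; simp
  simp only [MonoidalCategory.comp_whiskerRight, assoc]
  rw [← hm, associator_naturality_middle_assoc, ← MonoidalCategory.whiskerLeft_comp_assoc, hf]
  simp only [MonoidalCategory.whiskerLeft_comp, assoc]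
  rw [hm', associator_inv_naturality_right_assoc, whisker_exchange_assoc]
  monoidal

lemma IsMMor.exists_comp_fst (QD : QData C) (hnd : NonDeg Cc mC) (hf : IsMMor mB f₁ f₂)
    (hg : IsMMor mC g₁ g₂) (hm : Mult₁ mB g₁) (hd₁ : QD.Q g₁) (hd₂ : QD.Q g₂) :
    ∃ p₁ : A ⊗ Cc ⟶ Cc, (A ◁ g₁) ≫ p₁ = (α_ A B Cc).inv ≫ (f₁ ▷ Cc) ≫ g₁ := by
  refine QD.exists_whiskerLeft_comp_eq hd₁ A _ fun Z x y hxy => ?_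
  have key : ∀ w : Z ⟶ B ⊗ Cc, (B ◁ ((A ◁ w) ≫ (α_ A B Cc).inv ≫ (f₁ ▷ Cc) ≫ g₁)) ≫ g₁
      = (α_ B A Z).inv ≫ ((B ⊗ A) ◁ (w ≫ g₁)) ≫ (f₂ ▷ Cc) ≫ g₁ := by
    intro w
    rw [MonoidalCategory.whiskerLeft_comp, assoc, hf.exchange₁ hm,
      associator_inv_naturality_right_assoc, ← MonoidalCategory.whiskerLeft_comp_assoc]
  have := QD.epi_of_mem (QD.whiskerRight_mem hd₂ (A ⊗ Z))
  exact hg.eq_of_whiskerLeft_comp_fst_eq hnd (by rw [key, key, hxy])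

lemma IsMMor.exists_comp_snd (QD : QData C) (hnd : NonDeg Cc mC) (hf : IsMMor mB f₁ f₂)
    (hg : IsMMor mC g₁ g₂) (hm : Mult₂ mB g₂) (hd₁ : QD.Q g₁) (hd₂ : QD.Q g₂) :
    ∃ p₂ : Cc ⊗ A ⟶ Cc, (g₂ ▷ A) ≫ p₂ = (α_ Cc B A).hom ≫ (Cc ◁ f₂) ≫ g₂ := by
  refine QD.exists_whiskerRight_comp_eq hd₂ A _ fun Z x y hxy => ?_
  have key : ∀ w : Z ⟶ Cc ⊗ B, (((w ▷ A) ≫ (α_ Cc B A).hom ≫ (Cc ◁ f₂) ≫ g₂) ▷ B) ≫ g₂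
      = (α_ Z A B).hom ≫ ((w ≫ g₂) ▷ (A ⊗ B)) ≫ (Cc ◁ f₁) ≫ g₂ := by
    intro w
    rw [MonoidalCategory.comp_whiskerRight, assoc, hf.exchange₂ hm,
      associator_naturality_left_assoc, ← comp_whiskerRight_assoc]
  have := QD.epi_of_mem (QD.whiskerLeft_mem (Z ⊗ A) hd₁)
  exact hg.eq_of_whiskerRight_comp_snd_eq hnd (by rw [key, key, hxy])

variable {p₁ : A ⊗ Cc ⟶ Cc} {p₂ : Cc ⊗ A ⟶ Cc}

lemma IsMMor.isMMor_of_whisker_comp_eq (hf : IsMMor mB f₁ f₂) (hg : IsMMor mC g₁ g₂)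
    (hm : Mult₁ mB g₁) [∀ X, Epi (X ◁ g₁)] [∀ X, Epi (g₂ ▷ X)]
    (hp₁ : (A ◁ g₁) ≫ p₁ = (α_ A B Cc).inv ≫ (f₁ ▷ Cc) ≫ g₁)
    (hp₂ : (g₂ ▷ A) ≫ p₂ = (α_ Cc B A).hom ≫ (Cc ◁ f₂) ≫ g₂) :
    IsMMor mC p₁ p₂ := by
  have := epi_whiskerRight_whiskerRight g₂ A Cc
  rw [IsMMor, ← cancel_epi ((g₂ ▷ A) ▷ Cc), ← cancel_epi (((Cc ⊗ B) ⊗ A) ◁ g₁)]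
  rw [← comp_whiskerRight_assoc, hp₂]
  simp only [MonoidalCategory.comp_whiskerRight, assoc]
  rw [hg, associator_naturality_middle_assoc, whisker_exchange_assoc,
    associator_naturality_right_assoc]
  rw [associator_naturality_left_assoc, ← whisker_exchange_assoc g₂ p₁, hg,
    associator_naturality_right_assoc, ← MonoidalCategory.whiskerLeft_comp_assoc (Cc ⊗ B), hp₁,
    associator_naturality_right_assoc]
  conv_rhs => rw [← MonoidalCategory.whiskerLeft_comp_assoc Cc, hf.exchange₁ hm]
  simp only [MonoidalCategory.whiskerLeft_comp, assoc]
  monoidal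

lemma Mult₁.of_whiskerLeft_comp_eq (hmf : Mult₁ mA f₁) [∀ X, Epi (X ◁ g₁)]
    (hp₁ : (A ◁ g₁) ≫ p₁ = (α_ A B Cc).inv ≫ (f₁ ▷ Cc) ≫ g₁) : Mult₁ mA p₁ := by
  rw [Mult₁, ← cancel_epi ((A ⊗ A) ◁ g₁)]
  rw [whisker_exchange_assoc mA g₁, hp₁, associator_inv_naturality_left_assoc,
    ← comp_whiskerRight_assoc, hmf]
  simp only [MonoidalCategory.comp_whiskerRight, assoc]
  rw [associator_naturality_right_assoc, ← MonoidalCategory.whiskerLeft_comp_assoc, hp₁]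
  simp only [MonoidalCategory.whiskerLeft_comp, assoc]
  rw [hp₁, associator_inv_naturality_middle_assoc]
  monoidal

lemma Mult₂.of_whiskerRight_comp_eq (hmf : Mult₂ mA f₂) [∀ X, Epi (g₂ ▷ X)]
    (hp₂ : (g₂ ▷ A) ≫ p₂ = (α_ Cc B A).hom ≫ (Cc ◁ f₂) ≫ g₂) : Mult₂ mA p₂ := by
  have hmf' : (B ◁ mA) ≫ f₂ = (α_ B A A).inv ≫ (f₂ ▷ A) ≫ f₂ := by rw [← hmf]; simp
  have := epi_whiskerRight_whiskerRight g₂ A A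
  rw [Mult₂, ← cancel_epi ((g₂ ▷ A) ▷ A)]
  rw [associator_naturality_left_assoc, ← whisker_exchange_assoc g₂ mA, hp₂,
    associator_naturality_right_assoc, ← MonoidalCategory.whiskerLeft_comp_assoc, hmf']
  simp only [MonoidalCategory.whiskerLeft_comp, assoc]
  rw [← comp_whiskerRight_assoc, hp₂]
  simp only [MonoidalCategory.comp_whiskerRight, assoc]
  rw [hp₂, associator_naturality_middle_assoc]
  monoidal

end Composite

theorem mmor_composition_exists_unique_general (QD : QData C) {A B Cc : C}
    (mA : A ⊗ A ⟶ A) (mB : B ⊗ B ⟶ B) (mC : Cc ⊗ Cc ⟶ Cc)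
    (hndC : NonDeg Cc mC)
    (f₁ : A ⊗ B ⟶ B) (f₂ : B ⊗ A ⟶ B) (hf : IsMMor mB f₁ f₂)
    (g₁ : B ⊗ Cc ⟶ Cc) (g₂ : Cc ⊗ B ⟶ Cc) (hg : IsMMor mC g₁ g₂)
    (hd₁ : QD.Q g₁) (hd₂ : QD.Q g₂)
    (hm₁ : Mult₁ mB g₁) (hm₂ : Mult₂ mB g₂) :
    ∃ (p₁ : A ⊗ Cc ⟶ Cc) (p₂ : Cc ⊗ A ⟶ Cc),
      (IsMMor mC p₁ p₂ ∧
        ((α_ A B Cc).hom ≫ (A ◁ g₁) ≫ p₁ = (f₁ ▷ Cc) ≫ g₁) ∧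
        ((g₂ ▷ A) ≫ p₂ = (α_ Cc B A).hom ≫ (Cc ◁ f₂) ≫ g₂)) ∧
      (∀ (q₁ : A ⊗ Cc ⟶ Cc) (q₂ : Cc ⊗ A ⟶ Cc), IsMMor mC q₁ q₂ →
        ((α_ A B Cc).hom ≫ (A ◁ g₁) ≫ q₁ = (f₁ ▷ Cc) ≫ g₁) →
        ((g₂ ▷ A) ≫ q₂ = (α_ Cc B A).hom ≫ (Cc ◁ f₂) ≫ g₂) →
        q₁ = p₁ ∧ q₂ = p₂) ∧
      (QD.Q f₁ → QD.Q f₂ → QD.Q p₁ ∧ QD.Q p₂) ∧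
      (Mult₁ mA f₁ → Mult₂ mA f₂ → Mult₁ mA p₁ ∧ Mult₂ mA p₂) := by
  have : ∀ X, Epi (X ◁ g₁) := fun X => QD.epi_of_mem (QD.whiskerLeft_mem X hd₁)
  have : ∀ X, Epi (g₂ ▷ X) := fun X => QD.epi_of_mem (QD.whiskerRight_mem hd₂ X)
  obtain ⟨p₁, hp₁⟩ := hf.exists_comp_fst QD hndC hg hm₁ hd₁ hd₂
  obtain ⟨p₂, hp₂⟩ := hf.exists_comp_snd QD hndC hg hm₂ hd₁ hd₂
  have hp₁' : (α_ A B Cc).hom ≫ (A ◁ g₁) ≫ p₁ = (f₁ ▷ Cc) ≫ g₁ := by simp [hp₁]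
  refine ⟨p₁, p₂, ⟨hf.isMMor_of_whisker_comp_eq hg hm₁ hp₁ hp₂, hp₁', hp₂⟩, ?_, ?_, ?_⟩
  · intro q₁ q₂ _ hq₁ hq₂
    refine ⟨?_, by rw [← cancel_epi (g₂ ▷ A), hp₂, hq₂]⟩
    rw [← cancel_epi ((α_ A B Cc).hom ≫ (A ◁ g₁)), assoc, assoc, hq₁, hp₁']
  · intro hQf₁ hQf₂
    refine ⟨QD.cancel _ _ (QD.whiskerLeft_mem A hd₁) ?_,
      QD.cancel _ _ (QD.whiskerRight_mem hd₂ A) ?_⟩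
    · rw [hp₁]
      exact QD.comp_mem _ _ (QD.iso_mem _ inferInstance)
        (QD.comp_mem _ _ (QD.whiskerRight_mem hQf₁ Cc) hd₁)
    · rw [hp₂]
      exact QD.comp_mem _ _ (QD.iso_mem _ inferInstance)
        (QD.comp_mem _ _ (QD.whiskerLeft_mem Cc hQf₂) hd₂)
  · exact fun hmf₁ hmf₂ => ⟨hmf₁.of_whiskerLeft_comp_eq hp₁, hmf₂.of_whiskerRight_comp_eq hp₂⟩

/-- Proposition 3.2: existence and uniqueness of the composite `g ∙ f` of an
`𝕄`-morphism `f : A ⇸ B` with a dense multiplicative `𝕄`-morphism `g : B ⇸ C`,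
together with inheritance of density and multiplicativity from `f`. -/
theorem mmor_composition_exists_unique (QD : QData C) {A B Cc : C}
    (mA : A ⊗ A ⟶ A) (mB : B ⊗ B ⟶ B) (mC : Cc ⊗ Cc ⟶ Cc)
    (hA : SgAssoc A mA) (hB : SgAssoc B mB) (hC : SgAssoc Cc mC)
    (hndB : NonDeg B mB) (hndC : NonDeg Cc mC)
    (hQB : QD.Q mB) (hQC : QD.Q mC)
    (f₁ : A ⊗ B ⟶ B) (f₂ : B ⊗ A ⟶ B) (hf : IsMMor mB f₁ f₂)
    (g₁ : B ⊗ Cc ⟶ Cc) (g₂ : Cc ⊗ B ⟶ Cc) (hg : IsMMor mC g₁ g₂)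
    (hd₁ : QD.Q g₁) (hd₂ : QD.Q g₂)
    (hm₁ : Mult₁ mB g₁) (hm₂ : Mult₂ mB g₂) :
    ∃ (p₁ : A ⊗ Cc ⟶ Cc) (p₂ : Cc ⊗ A ⟶ Cc),
      (IsMMor mC p₁ p₂ ∧
        ((α_ A B Cc).hom ≫ (A ◁ g₁) ≫ p₁ = (f₁ ▷ Cc) ≫ g₁) ∧
        ((g₂ ▷ A) ≫ p₂ = (α_ Cc B A).hom ≫ (Cc ◁ f₂) ≫ g₂)) ∧
      (∀ (q₁ : A ⊗ Cc ⟶ Cc) (q₂ : Cc ⊗ A ⟶ Cc), IsMMor mC q₁ q₂ →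
        ((α_ A B Cc).hom ≫ (A ◁ g₁) ≫ q₁ = (f₁ ▷ Cc) ≫ g₁) →
        ((g₂ ▷ A) ≫ q₂ = (α_ Cc B A).hom ≫ (Cc ◁ f₂) ≫ g₂) →
        q₁ = p₁ ∧ q₂ = p₂) ∧
      (QD.Q f₁ → QD.Q f₂ → QD.Q p₁ ∧ QD.Q p₂) ∧
      (Mult₁ mA f₁ → Mult₂ mA f₂ → Mult₁ mA p₁ ∧ Mult₂ mA p₂) :=
  mmor_composition_exists_unique_general QD mA mB mC hndC f₁ f₂ hf g₁ g₂ hg hd₁ hd₂ hm₁ hm₂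
end

section
/- Composition of M-morphisms is associative: if f : A ⇸ B is an M-morphism and g : B ⇸ C, h : C ⇸ D are dense and multiplicative M-morphisms (with C, D non-degenerate semigroups), then (h∙g)∙f = h∙(g∙f). -/
open CategoryTheory Category MonoidalCategory Limits

universe v u

variable {C : Type u} [Category.{v} C] [MonoidalCategory C]

section Composite

variable {A B Cc D : C}

/-- `k₁` is the first component of the composite `g ∙ f` of `f : A ⇸ B` and `g : B ⇸ Cc`. -/
def IsComp₁ (f₁ : A ⊗ B ⟶ B) (g₁ : B ⊗ Cc ⟶ Cc) (k₁ : A ⊗ Cc ⟶ Cc) : Prop :=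
  (α_ A B Cc).hom ≫ (A ◁ g₁) ≫ k₁ = (f₁ ▷ Cc) ≫ g₁

/-- `k₂` is the second component of the composite `g ∙ f` of `f : A ⇸ B` and `g : B ⇸ Cc`. -/
def IsComp₂ (f₂ : B ⊗ A ⟶ B) (g₂ : Cc ⊗ B ⟶ Cc) (k₂ : Cc ⊗ A ⟶ Cc) : Prop :=
  (g₂ ▷ A) ≫ k₂ = (α_ Cc B A).hom ≫ (Cc ◁ f₂) ≫ g₂

lemma IsComp₁.whiskerLeft_eq {f₁ : A ⊗ B ⟶ B} {g₁ : B ⊗ Cc ⟶ Cc} {k₁ : A ⊗ Cc ⟶ Cc}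
    (hk : IsComp₁ f₁ g₁ k₁) : (A ◁ g₁) ≫ k₁ = (α_ A B Cc).inv ≫ (f₁ ▷ Cc) ≫ g₁ := by
  rw [← hk, Iso.inv_hom_id_assoc]

lemma IsComp₂.whiskerLeft_eq {f₂ : B ⊗ A ⟶ B} {g₂ : Cc ⊗ B ⟶ Cc} {k₂ : Cc ⊗ A ⟶ Cc}
    (hk : IsComp₂ f₂ g₂ k₂) : (Cc ◁ f₂) ≫ g₂ = (α_ Cc B A).inv ≫ (g₂ ▷ A) ≫ k₂ := by
  rw [hk, Iso.inv_hom_id_assoc]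

section First

variable {f₁ : A ⊗ B ⟶ B} {g₁ : B ⊗ Cc ⟶ Cc} {h₁ : Cc ⊗ D ⟶ D}

lemma IsComp₁.whiskerLeft_comp_left {hg₁ : B ⊗ D ⟶ D} {p₁ : A ⊗ D ⟶ D}
    (hhg : IsComp₁ g₁ h₁ hg₁) (hp : IsComp₁ f₁ hg₁ p₁) :
    (A ◁ ((g₁ ▷ D) ≫ h₁)) ≫ p₁ =
      (α_ A (B ⊗ Cc) D).inv ≫ (((α_ A B Cc).inv ≫ (f₁ ▷ Cc) ≫ g₁) ▷ D) ≫ h₁ := by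
  calc (A ◁ ((g₁ ▷ D) ≫ h₁)) ≫ p₁
      = (A ◁ (α_ B Cc D).hom) ≫ (A ◁ B ◁ h₁) ≫ (A ◁ hg₁) ≫ p₁ := by
        rw [← hhg]
        simp only [MonoidalCategory.whiskerLeft_comp, assoc]
    _ = (A ◁ (α_ B Cc D).hom) ≫ (A ◁ B ◁ h₁) ≫ (α_ A B D).inv ≫ (f₁ ▷ D) ≫ hg₁ := by
        rw [hp.whiskerLeft_eq]
    _ = (A ◁ (α_ B Cc D).hom) ≫ (α_ A B (Cc ⊗ D)).inv ≫ (f₁ ▷ (Cc ⊗ D)) ≫ (B ◁ h₁) ≫ hg₁ := by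
        rw [associator_inv_naturality_right_assoc, whisker_exchange_assoc]
    _ = (A ◁ (α_ B Cc D).hom) ≫ (α_ A B (Cc ⊗ D)).inv ≫ (f₁ ▷ (Cc ⊗ D)) ≫
          (α_ B Cc D).inv ≫ (g₁ ▷ D) ≫ h₁ := by
        rw [hhg.whiskerLeft_eq]
    _ = _ := by monoidal

lemma IsComp₁.whiskerLeft_comp_right {gf₁ : A ⊗ Cc ⟶ Cc} {q₁ : A ⊗ D ⟶ D}
    (hgf : IsComp₁ f₁ g₁ gf₁) (hq : IsComp₁ gf₁ h₁ q₁) :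
    (A ◁ ((g₁ ▷ D) ≫ h₁)) ≫ q₁ =
      (α_ A (B ⊗ Cc) D).inv ≫ (((α_ A B Cc).inv ≫ (f₁ ▷ Cc) ≫ g₁) ▷ D) ≫ h₁ := by
  calc (A ◁ ((g₁ ▷ D) ≫ h₁)) ≫ q₁
      = (A ◁ (g₁ ▷ D)) ≫ (α_ A Cc D).inv ≫ (gf₁ ▷ D) ≫ h₁ := by
        rw [MonoidalCategory.whiskerLeft_comp_assoc, hq.whiskerLeft_eq]
    _ = (α_ A (B ⊗ Cc) D).inv ≫ (((A ◁ g₁) ≫ gf₁) ▷ D) ≫ h₁ := by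
        rw [associator_inv_naturality_middle_assoc, comp_whiskerRight_assoc]
    _ = _ := by rw [hgf.whiskerLeft_eq]

lemma IsComp₁.assoc_of_epi [Epi (A ◁ ((g₁ ▷ D) ≫ h₁))]
    {hg₁ : B ⊗ D ⟶ D} {gf₁ : A ⊗ Cc ⟶ Cc} {p₁ q₁ : A ⊗ D ⟶ D}
    (hhg : IsComp₁ g₁ h₁ hg₁) (hgf : IsComp₁ f₁ g₁ gf₁)
    (hp : IsComp₁ f₁ hg₁ p₁) (hq : IsComp₁ gf₁ h₁ q₁) : p₁ = q₁ :=
  (cancel_epi _).mp ((whiskerLeft_comp_left hhg hp).trans (whiskerLeft_comp_right hgf hq).symm)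

end First

section Second

variable {f₂ : B ⊗ A ⟶ B} {g₂ : Cc ⊗ B ⟶ Cc} {h₂ : D ⊗ Cc ⟶ D}

lemma IsComp₂.whiskerRight_comp_left {hg₂ : D ⊗ B ⟶ D} {p₂ : D ⊗ A ⟶ D}
    (hhg : IsComp₂ g₂ h₂ hg₂) (hp : IsComp₂ f₂ hg₂ p₂) :
    (((D ◁ g₂) ≫ h₂) ▷ A) ≫ p₂ =
      (α_ D (Cc ⊗ B) A).hom ≫ (D ◁ ((α_ Cc B A).hom ≫ (Cc ◁ f₂) ≫ g₂)) ≫ h₂ := by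
  calc (((D ◁ g₂) ≫ h₂) ▷ A) ≫ p₂
      = ((α_ D Cc B).inv ▷ A) ≫ (h₂ ▷ B ▷ A) ≫ (hg₂ ▷ A) ≫ p₂ := by
        rw [hhg.whiskerLeft_eq]
        simp only [comp_whiskerRight, assoc]
    _ = ((α_ D Cc B).inv ▷ A) ≫ (h₂ ▷ B ▷ A) ≫ (α_ D B A).hom ≫ (D ◁ f₂) ≫ hg₂ := by
        rw [hp]
    _ = ((α_ D Cc B).inv ▷ A) ≫ (α_ (D ⊗ Cc) B A).hom ≫ ((D ⊗ Cc) ◁ f₂) ≫ (h₂ ▷ B) ≫ hg₂ := by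
        rw [associator_naturality_left_assoc, whisker_exchange_assoc]
    _ = ((α_ D Cc B).inv ▷ A) ≫ (α_ (D ⊗ Cc) B A).hom ≫ ((D ⊗ Cc) ◁ f₂) ≫
          (α_ D Cc B).hom ≫ (D ◁ g₂) ≫ h₂ := by
        rw [hhg]
    _ = _ := by monoidal

lemma IsComp₂.whiskerRight_comp_right {gf₂ : Cc ⊗ A ⟶ Cc} {q₂ : D ⊗ A ⟶ D}
    (hgf : IsComp₂ f₂ g₂ gf₂) (hq : IsComp₂ gf₂ h₂ q₂) :
    (((D ◁ g₂) ≫ h₂) ▷ A) ≫ q₂ =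
      (α_ D (Cc ⊗ B) A).hom ≫ (D ◁ ((α_ Cc B A).hom ≫ (Cc ◁ f₂) ≫ g₂)) ≫ h₂ := by
  calc (((D ◁ g₂) ≫ h₂) ▷ A) ≫ q₂
      = ((D ◁ g₂) ▷ A) ≫ (α_ D Cc A).hom ≫ (D ◁ gf₂) ≫ h₂ := by
        rw [comp_whiskerRight_assoc, hq]
    _ = (α_ D (Cc ⊗ B) A).hom ≫ (D ◁ ((g₂ ▷ A) ≫ gf₂)) ≫ h₂ := by
        rw [associator_naturality_middle_assoc, MonoidalCategory.whiskerLeft_comp_assoc]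
    _ = _ := by rw [hgf]

lemma IsComp₂.assoc_of_epi [Epi (((D ◁ g₂) ≫ h₂) ▷ A)]
    {hg₂ : D ⊗ B ⟶ D} {gf₂ : Cc ⊗ A ⟶ Cc} {p₂ q₂ : D ⊗ A ⟶ D}
    (hhg : IsComp₂ g₂ h₂ hg₂) (hgf : IsComp₂ f₂ g₂ gf₂)
    (hp : IsComp₂ f₂ hg₂ p₂) (hq : IsComp₂ gf₂ h₂ q₂) : p₂ = q₂ :=
  (cancel_epi _).mp
    ((whiskerRight_comp_left hhg hp).trans (whiskerRight_comp_right hgf hq).symm)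

end Second

end Composite

theorem mmor_composition_assoc_general (QD : QData C) {A B Cc D : C}
    (f₁ : A ⊗ B ⟶ B) (f₂ : B ⊗ A ⟶ B)
    (g₁ : B ⊗ Cc ⟶ Cc) (g₂ : Cc ⊗ B ⟶ Cc)
    (hgd₁ : QD.Q g₁) (hgd₂ : QD.Q g₂)
    (h₁ : Cc ⊗ D ⟶ D) (h₂ : D ⊗ Cc ⟶ D)
    (hhd₁ : QD.Q h₁) (hhd₂ : QD.Q h₂)
    -- the composite h ∙ g
    (hg₁ : B ⊗ D ⟶ D) (hg₂ : D ⊗ B ⟶ D)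
    (hhg₁ : (α_ B Cc D).hom ≫ (B ◁ h₁) ≫ hg₁ = (g₁ ▷ D) ≫ h₁)
    (hhg₂ : (h₂ ▷ B) ≫ hg₂ = (α_ D Cc B).hom ≫ (D ◁ g₂) ≫ h₂)
    -- the composite g ∙ f
    (gf₁ : A ⊗ Cc ⟶ Cc) (gf₂ : Cc ⊗ A ⟶ Cc)
    (hgf₁ : (α_ A B Cc).hom ≫ (A ◁ g₁) ≫ gf₁ = (f₁ ▷ Cc) ≫ g₁)
    (hgf₂ : (g₂ ▷ A) ≫ gf₂ = (α_ Cc B A).hom ≫ (Cc ◁ f₂) ≫ g₂)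
    -- the composite (h ∙ g) ∙ f
    (p₁ : A ⊗ D ⟶ D) (p₂ : D ⊗ A ⟶ D)
    (hp₁ : (α_ A B D).hom ≫ (A ◁ hg₁) ≫ p₁ = (f₁ ▷ D) ≫ hg₁)
    (hp₂ : (hg₂ ▷ A) ≫ p₂ = (α_ D B A).hom ≫ (D ◁ f₂) ≫ hg₂)
    -- the composite h ∙ (g ∙ f)
    (q₁ : A ⊗ D ⟶ D) (q₂ : D ⊗ A ⟶ D)
    (hq₁ : (α_ A Cc D).hom ≫ (A ◁ h₁) ≫ q₁ = (gf₁ ▷ D) ≫ h₁)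
    (hq₂ : (h₂ ▷ A) ≫ q₂ = (α_ D Cc A).hom ≫ (D ◁ gf₂) ≫ h₂) :
    p₁ = q₁ ∧ p₂ = q₂ := by
  have dense₁ : QD.Q ((g₁ ▷ D) ≫ h₁) := QD.comp_mem _ _ (QD.whiskerRight_mem hgd₁ D) hhd₁
  have dense₂ : QD.Q ((D ◁ g₂) ≫ h₂) := QD.comp_mem _ _ (QD.whiskerLeft_mem D hgd₂) hhd₂
  have := QD.epi_of_mem (QD.whiskerLeft_mem A dense₁)
  have := QD.epi_of_mem (QD.whiskerRight_mem dense₂ A)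
  exact ⟨IsComp₁.assoc_of_epi hhg₁ hgf₁ hp₁ hq₁, IsComp₂.assoc_of_epi hhg₂ hgf₂ hp₂ hq₂⟩

/-- Proposition 3.3: composition of `𝕄`-morphisms is associative:
`(h ∙ g) ∙ f = h ∙ (g ∙ f)` whenever `g` and `h` are dense and multiplicative. -/
theorem mmor_composition_assoc (QD : QData C) {A B Cc D : C}
    (mB : B ⊗ B ⟶ B) (mC : Cc ⊗ Cc ⟶ Cc) (mD : D ⊗ D ⟶ D)
    (hB : SgAssoc B mB) (hC : SgAssoc Cc mC) (hD : SgAssoc D mD)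
    (hndC : NonDeg Cc mC) (hndD : NonDeg D mD)
    (f₁ : A ⊗ B ⟶ B) (f₂ : B ⊗ A ⟶ B) (hf : IsMMor mB f₁ f₂)
    (g₁ : B ⊗ Cc ⟶ Cc) (g₂ : Cc ⊗ B ⟶ Cc) (hg : IsMMor mC g₁ g₂)
    (hgd₁ : QD.Q g₁) (hgd₂ : QD.Q g₂) (hgm₁ : Mult₁ mB g₁) (hgm₂ : Mult₂ mB g₂)
    (h₁ : Cc ⊗ D ⟶ D) (h₂ : D ⊗ Cc ⟶ D) (hh : IsMMor mD h₁ h₂)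
    (hhd₁ : QD.Q h₁) (hhd₂ : QD.Q h₂) (hhm₁ : Mult₁ mC h₁) (hhm₂ : Mult₂ mC h₂)
    -- the composite h ∙ g
    (hg₁ : B ⊗ D ⟶ D) (hg₂ : D ⊗ B ⟶ D) (hhg : IsMMor mD hg₁ hg₂)
    (hhg₁ : (α_ B Cc D).hom ≫ (B ◁ h₁) ≫ hg₁ = (g₁ ▷ D) ≫ h₁)
    (hhg₂ : (h₂ ▷ B) ≫ hg₂ = (α_ D Cc B).hom ≫ (D ◁ g₂) ≫ h₂)
    -- the composite g ∙ f
    (gf₁ : A ⊗ Cc ⟶ Cc) (gf₂ : Cc ⊗ A ⟶ Cc) (hgf : IsMMor mC gf₁ gf₂)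
    (hgf₁ : (α_ A B Cc).hom ≫ (A ◁ g₁) ≫ gf₁ = (f₁ ▷ Cc) ≫ g₁)
    (hgf₂ : (g₂ ▷ A) ≫ gf₂ = (α_ Cc B A).hom ≫ (Cc ◁ f₂) ≫ g₂)
    -- the composite (h ∙ g) ∙ f
    (p₁ : A ⊗ D ⟶ D) (p₂ : D ⊗ A ⟶ D) (hp : IsMMor mD p₁ p₂)
    (hp₁ : (α_ A B D).hom ≫ (A ◁ hg₁) ≫ p₁ = (f₁ ▷ D) ≫ hg₁)
    (hp₂ : (hg₂ ▷ A) ≫ p₂ = (α_ D B A).hom ≫ (D ◁ f₂) ≫ hg₂)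
    -- the composite h ∙ (g ∙ f)
    (q₁ : A ⊗ D ⟶ D) (q₂ : D ⊗ A ⟶ D) (hq : IsMMor mD q₁ q₂)
    (hq₁ : (α_ A Cc D).hom ≫ (A ◁ h₁) ≫ q₁ = (gf₁ ▷ D) ≫ h₁)
    (hq₂ : (h₂ ▷ A) ≫ q₂ = (α_ D Cc A).hom ≫ (D ◁ gf₂) ≫ h₂) :
    p₁ = q₁ ∧ p₂ = q₂ :=
  mmor_composition_assoc_general QD f₁ f₂ g₁ g₂ hgd₁ hgd₂ h₁ h₂ hhd₁ hhd₂ hg₁ hg₂ hhg₁ hhg₂ gf₁ gf₂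
    hgf₁ hgf₂ p₁ p₂ hp₁ hp₂ q₁ q₂ hq₁ hq₂
end

section
/- For a non-degenerate semigroup A with multiplication m in Q, the pair i = (m, m) is a multiplicative M-morphism A ⇸ A, it is dense, and it serves as an identity: for any dense multiplicative M-morphism f : A ⇸ B one has f∙i = f, and for any M-morphism f : A ⇸ B one has i_B∙f = f when the identity i_B on B is dense. -/
open CategoryTheory Category MonoidalCategory Limits

universe v u

variable {C : Type u} [Category.{v} C] [MonoidalCategory C]

/-! The pair `(m, m)` satisfies all its defining equations by associativity alone, and
`f ∙ i = f` is multiplicativity of `f`. For `i_B ∙ f = f` one needs `f₁` to be right and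
`f₂` left `B`-linear; this follows from eq. (2) after multiplying by one more element of `B`
and reassociating, since non-degeneracy of `m_B` lets that extra factor be cancelled. -/

section

variable {A B : C} {m : B ⊗ B ⟶ B}

lemma NonDeg.mul_right_cancel (hnd : NonDeg B m) {X : C} {p q : X ⟶ B}
    (h : (p ▷ B) ≫ m = (q ▷ B) ≫ m) : p = q := by
  have hpq := hnd.1 X (𝟙_ C) (a₁ := p ≫ (λ_ B).inv) (a₂ := q ≫ (λ_ B).inv) <| by
    have hunitor : ((λ_ B).inv ▷ B) ≫ (α_ (𝟙_ C) B B).hom ≫ (𝟙_ C ◁ m) = m ≫ (λ_ B).inv := by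
      simp
    simp only [comp_whiskerRight, assoc, hunitor, reassoc_of% h]
  simpa using congrArg (· ≫ (λ_ B).hom) hpq

lemma NonDeg.mul_left_cancel (hnd : NonDeg B m) {X : C} {p q : X ⟶ B}
    (h : (B ◁ p) ≫ m = (B ◁ q) ≫ m) : p = q := by
  have hpq := hnd.2 X (𝟙_ C) (a₁ := p ≫ (ρ_ B).inv) (a₂ := q ≫ (ρ_ B).inv) <| by
    have hunitor : (B ◁ (ρ_ B).inv) ≫ (α_ B B (𝟙_ C)).inv ≫ (m ▷ 𝟙_ C) = m ≫ (ρ_ B).inv := by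
      simp
    simp only [MonoidalCategory.whiskerLeft_comp, assoc, hunitor, reassoc_of% h]
  simpa using congrArg (· ≫ (ρ_ B).hom) hpq

lemma IsMMor.whiskerLeft_fst_comp {f₁ : A ⊗ B ⟶ B} {f₂ : B ⊗ A ⟶ B} (hf : IsMMor m f₁ f₂) :
    (B ◁ f₁) ≫ m = (α_ B A B).inv ≫ (f₂ ▷ B) ≫ m := by
  rw [hf, Iso.inv_hom_id_assoc]

-- Elementwise: `b' (f₁(a, b b'')) = f₂(b', a) (b b'') = (b' f₁(a, b)) b''`; cancel `b'`.
lemma IsMMor.fst_mul_right (hB : SgAssoc B m) (hnd : NonDeg B m) {f₁ : A ⊗ B ⟶ B}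
    {f₂ : B ⊗ A ⟶ B} (hf : IsMMor m f₁ f₂) :
    (α_ A B B).hom ≫ (A ◁ m) ≫ f₁ = (f₁ ▷ B) ≫ m := by
  have hB' : (B ◁ m) ≫ m = (α_ B B B).inv ≫ (m ▷ B) ≫ m := by
    rw [hB, Iso.inv_hom_id_assoc]
  have hcoh : (B ◁ (α_ A B B).hom) ≫ (α_ B A (B ⊗ B)).inv ≫ (α_ (B ⊗ A) B B).inv
      ≫ ((α_ B A B).hom ▷ B) = (α_ B (A ⊗ B) B).inv := by
    monoidal
  apply hnd.mul_left_cancel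
  calc B ◁ ((α_ A B B).hom ≫ (A ◁ m) ≫ f₁) ≫ m
      = (B ◁ (α_ A B B).hom) ≫ (B ◁ (A ◁ m)) ≫ (α_ B A B).inv ≫ (f₂ ▷ B) ≫ m := by
        simp only [MonoidalCategory.whiskerLeft_comp, assoc, hf.whiskerLeft_fst_comp]
    _ = (B ◁ (α_ A B B).hom) ≫ (α_ B A (B ⊗ B)).inv ≫ (f₂ ▷ (B ⊗ B)) ≫ (B ◁ m) ≫ m := by
        rw [associator_inv_naturality_right_assoc, whisker_exchange_assoc]
    _ = (B ◁ (α_ A B B).hom) ≫ (α_ B A (B ⊗ B)).inv ≫ (α_ (B ⊗ A) B B).inv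
        ≫ ((f₂ ▷ B) ▷ B) ≫ (m ▷ B) ≫ m := by
        rw [hB', associator_inv_naturality_left_assoc]
    _ = (B ◁ (α_ A B B).hom) ≫ (α_ B A (B ⊗ B)).inv ≫ (α_ (B ⊗ A) B B).inv
        ≫ ((α_ B A B).hom ▷ B) ≫ ((B ◁ f₁) ▷ B) ≫ (m ▷ B) ≫ m := by
        rw [← comp_whiskerRight_assoc, hf]
        simp only [comp_whiskerRight, assoc]
    _ = (α_ B (A ⊗ B) B).inv ≫ ((B ◁ f₁) ▷ B) ≫ (m ▷ B) ≫ m := by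
        rw [reassoc_of% hcoh]
    _ = B ◁ ((f₁ ▷ B) ≫ m) ≫ m := by
        simp only [MonoidalCategory.whiskerLeft_comp, assoc]
        rw [hB', associator_inv_naturality_middle_assoc]

-- Elementwise: `f₂(b b', a) b'' = (b b') f₁(a, b'') = b (f₂(b', a) b'')`; cancel `b''`.
lemma IsMMor.snd_mul_left (hB : SgAssoc B m) (hnd : NonDeg B m) {f₁ : A ⊗ B ⟶ B}
    {f₂ : B ⊗ A ⟶ B} (hf : IsMMor m f₁ f₂) :
    (m ▷ A) ≫ f₂ = (α_ B B A).hom ≫ (B ◁ f₂) ≫ m := by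
  have hcoh : (α_ (B ⊗ B) A B).hom ≫ (α_ B B (A ⊗ B)).hom ≫ (B ◁ (α_ B A B).inv)
      = ((α_ B B A).hom ▷ B) ≫ (α_ B (B ⊗ A) B).hom := by
    monoidal
  apply hnd.mul_right_cancel
  calc ((m ▷ A) ≫ f₂) ▷ B ≫ m
      = ((m ▷ A) ▷ B) ≫ (α_ B A B).hom ≫ (B ◁ f₁) ≫ m := by
        rw [comp_whiskerRight_assoc, hf]
    _ = (α_ (B ⊗ B) A B).hom ≫ ((B ⊗ B) ◁ f₁) ≫ (α_ B B B).hom ≫ (B ◁ m) ≫ m := by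
        rw [associator_naturality_left_assoc, ← whisker_exchange_assoc, hB]
    _ = (α_ (B ⊗ B) A B).hom ≫ (α_ B B (A ⊗ B)).hom ≫ (B ◁ (α_ B A B).inv)
        ≫ (B ◁ (f₂ ▷ B)) ≫ (B ◁ m) ≫ m := by
        rw [associator_naturality_right_assoc, ← MonoidalCategory.whiskerLeft_comp_assoc,
          hf.whiskerLeft_fst_comp]
        simp only [MonoidalCategory.whiskerLeft_comp, assoc]
    _ = ((α_ B B A).hom ≫ (B ◁ f₂) ≫ m) ▷ B ≫ m := by
        rw [reassoc_of% hcoh]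
        simp only [comp_whiskerRight, assoc]
        rw [hB, associator_naturality_middle_assoc]

end

theorem identity_mmor_general (QD : QData C) {A B : C} (mA : A ⊗ A ⟶ A) (mB : B ⊗ B ⟶ B)
    (hA : SgAssoc A mA) (hB : SgAssoc B mB)
    (hndB : NonDeg B mB)
    (hQA : QD.Q mA)
    (f₁ : A ⊗ B ⟶ B) (f₂ : B ⊗ A ⟶ B) (hf : IsMMor mB f₁ f₂) :
    (IsMMor mA mA mA ∧ Mult₁ mA mA ∧ Mult₂ mA mA ∧ QD.Q mA) ∧
    -- `f ∙ i = f`: the components of `f` satisfy the defining equations of `f ∙ i`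
    (QD.Q f₁ → QD.Q f₂ → Mult₁ mA f₁ → Mult₂ mA f₂ →
      ((α_ A A B).hom ≫ (A ◁ f₁) ≫ f₁ = (mA ▷ B) ≫ f₁) ∧
      ((f₂ ▷ A) ≫ f₂ = (α_ B A A).hom ≫ (B ◁ mA) ≫ f₂)) ∧
    -- `i_B ∙ f = f`: the components of `f` satisfy the defining equations of `i_B ∙ f`
    (((α_ A B B).hom ≫ (A ◁ mB) ≫ f₁ = (f₁ ▷ B) ≫ mB) ∧
     ((mB ▷ A) ≫ f₂ = (α_ B B A).hom ≫ (B ◁ f₂) ≫ mB)) :=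
  ⟨⟨hA, hA, hA.symm, hQA⟩, fun _ _ hf₁ hf₂ => ⟨hf₁.symm, hf₂.symm⟩,
    hf.fst_mul_right hB hndB, hf.snd_mul_left hB hndB⟩

/-- Proposition 3.4 together with the preceding discussion: the pair `i = (m, m)` is a
multiplicative `𝕄`-morphism `A ⇸ A`, which is dense when `m ∈ Q`, and it acts as an
identity for the composition `∙`: `f ∙ i = f` for `f` dense and multiplicative, and
`i_B ∙ f = f` for any `𝕄`-morphism `f` (when `i_B` is dense). -/
theorem identity_mmor (QD : QData C) {A B : C} (mA : A ⊗ A ⟶ A) (mB : B ⊗ B ⟶ B)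
    (hA : SgAssoc A mA) (hB : SgAssoc B mB)
    (hndA : NonDeg A mA) (hndB : NonDeg B mB)
    (hQA : QD.Q mA) (hQB : QD.Q mB)
    (f₁ : A ⊗ B ⟶ B) (f₂ : B ⊗ A ⟶ B) (hf : IsMMor mB f₁ f₂) :
    (IsMMor mA mA mA ∧ Mult₁ mA mA ∧ Mult₂ mA mA ∧ QD.Q mA) ∧
    -- `f ∙ i = f`: the components of `f` satisfy the defining equations of `f ∙ i`
    (QD.Q f₁ → QD.Q f₂ → Mult₁ mA f₁ → Mult₂ mA f₂ →
      ((α_ A A B).hom ≫ (A ◁ f₁) ≫ f₁ = (mA ▷ B) ≫ f₁) ∧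
      ((f₂ ▷ A) ≫ f₂ = (α_ B A A).hom ≫ (B ◁ mA) ≫ f₂)) ∧
    -- `i_B ∙ f = f`: the components of `f` satisfy the defining equations of `i_B ∙ f`
    (((α_ A B B).hom ≫ (A ◁ mB) ≫ f₁ = (f₁ ▷ B) ≫ mB) ∧
     ((mB ▷ A) ≫ f₂ = (α_ B B A).hom ≫ (B ◁ f₂) ≫ mB)) :=
  identity_mmor_general QD mA mB hA hB hndB hQA f₁ f₂ hf
end

section
/- Let A be a semigroup with non-degenerate multiplication m such that the multiplier monoid M(A) exists, with universal M-morphism e = (e₁, e₂) and canonical morphism i : A → M(A) (corresponding to the M-morphism with both components m). Then i∘e₁ = m_{M(A)}∘(1⊗i) : M(A)⊗A → M(A) and i∘e₂ = m_{M(A)}∘(i⊗1) : A⊗M(A) → M(A), where m_{M(A)} is the monoid multiplication of M(A). -/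
open CategoryTheory Category MonoidalCategory Limits

universe v u

variable {C : Type u} [Category.{v} C] [MonoidalCategory C]

section Aux

variable {A : C} {m : A ⊗ A ⟶ A}

/-- Left cancellation from non-degeneracy. -/
lemma MM_cancelLeft (hnd : NonDeg A m) {Z : C} {p q : Z ⟶ A}
    (h : (A ◁ p) ≫ m = (A ◁ q) ≫ m) : p = q := by
  have key : ∀ r : Z ⟶ A, (A ◁ (r ≫ (ρ_ A).inv)) ≫ (α_ A A (𝟙_ C)).inv ≫ (m ▷ (𝟙_ C))
      = ((A ◁ r) ≫ m) ≫ (ρ_ A).inv := by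
    intro r
    rw [MonoidalCategory.whiskerLeft_comp, assoc, assoc]
    congr 1
    monoidal
  have h2 := hnd.2 Z (𝟙_ C) (a₁ := p ≫ (ρ_ A).inv) (a₂ := q ≫ (ρ_ A).inv) (by
    simp only [key, h])
  simpa using congrArg (fun t => t ≫ (ρ_ A).hom) h2

/-- Right cancellation from non-degeneracy. -/
lemma MM_cancelRight (hnd : NonDeg A m) {Z : C} {p q : Z ⟶ A}
    (h : (p ▷ A) ≫ m = (q ▷ A) ≫ m) : p = q := by
  have key : ∀ r : Z ⟶ A, ((r ≫ (λ_ A).inv) ▷ A) ≫ (α_ (𝟙_ C) A A).hom ≫ ((𝟙_ C) ◁ m)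
      = ((r ▷ A) ≫ m) ≫ (λ_ A).inv := by
    intro r
    rw [comp_whiskerRight, assoc, assoc]
    congr 1
    monoidal
  have h1 := hnd.1 Z (𝟙_ C) (a₁ := p ≫ (λ_ A).inv) (a₂ := q ≫ (λ_ A).inv) (by
    simp only [key, h])
  simpa using congrArg (fun t => t ≫ (λ_ A).hom) h1

variable {Mo : C} {e₁ : Mo ⊗ A ⟶ A} {e₂ : A ⊗ Mo ⟶ A}

/-- `e₁` is compatible with the multiplication on the right:
`t·(ab) = (t·a)b`. -/
lemma MM_fact1 (hnd : NonDeg A m)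
    (ha : (m ▷ A) ≫ m = (α_ A A A).hom ≫ (A ◁ m) ≫ m)
    (compat : (e₂ ▷ A) ≫ m = (α_ A Mo A).hom ≫ (A ◁ e₁) ≫ m) :
    (e₁ ▷ A) ≫ m = (α_ Mo A A).hom ≫ (Mo ◁ m) ≫ e₁ := by
  have ha' : (A ◁ m) ≫ m = (α_ A A A).inv ≫ (m ▷ A) ≫ m := by
    rw [ha, Iso.inv_hom_id_assoc]
  have compat' : (A ◁ e₁) ≫ m = (α_ A Mo A).inv ≫ (e₂ ▷ A) ≫ m := by
    rw [compat, Iso.inv_hom_id_assoc]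
  apply MM_cancelLeft hnd
  have hL : (A ◁ ((e₁ ▷ A) ≫ m)) ≫ m
      = (α_ A (Mo ⊗ A) A).inv ≫ ((α_ A Mo A).inv ▷ A) ≫ ((e₂ ▷ A) ▷ A) ≫ (m ▷ A) ≫ m := by
    simp only [MonoidalCategory.whiskerLeft_comp, assoc]
    rw [ha', associator_inv_naturality_middle_assoc, ← comp_whiskerRight_assoc, compat']
    simp only [comp_whiskerRight, assoc]
  have hR : (A ◁ ((α_ Mo A A).hom ≫ (Mo ◁ m) ≫ e₁)) ≫ m
      = (A ◁ (α_ Mo A A).hom) ≫ (α_ A Mo (A ⊗ A)).inv ≫ (e₂ ▷ (A ⊗ A)) ≫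
          (α_ A A A).inv ≫ (m ▷ A) ≫ m := by
    simp only [MonoidalCategory.whiskerLeft_comp, assoc]
    rw [compat', associator_inv_naturality_right_assoc, whisker_exchange_assoc, ha']
  rw [hL, hR]
  monoidal

/-- `e₂` is compatible with the multiplication on the left:
`(ab)·t = a(b·t)`. -/
lemma MM_fact2 (hnd : NonDeg A m)
    (ha : (m ▷ A) ≫ m = (α_ A A A).hom ≫ (A ◁ m) ≫ m)
    (compat : (e₂ ▷ A) ≫ m = (α_ A Mo A).hom ≫ (A ◁ e₁) ≫ m) :
    (A ◁ e₂) ≫ m = (α_ A A Mo).inv ≫ (m ▷ Mo) ≫ e₂ := by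
  apply MM_cancelRight hnd
  have hL : (((A ◁ e₂) ≫ m) ▷ A) ≫ m
      = (α_ A (A ⊗ Mo) A).hom ≫ (A ◁ (α_ A Mo A).hom) ≫ (A ◁ (A ◁ e₁)) ≫ (A ◁ m) ≫ m := by
    simp only [comp_whiskerRight, assoc]
    rw [ha, associator_naturality_middle_assoc, ← MonoidalCategory.whiskerLeft_comp_assoc,
      compat]
    simp only [MonoidalCategory.whiskerLeft_comp, assoc]
  have hR : ((((α_ A A Mo).inv ≫ (m ▷ Mo) ≫ e₂)) ▷ A) ≫ m
      = ((α_ A A Mo).inv ▷ A) ≫ (α_ (A ⊗ A) Mo A).hom ≫ ((A ⊗ A) ◁ e₁) ≫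
          (α_ A A A).hom ≫ (A ◁ m) ≫ m := by
    simp only [comp_whiskerRight, assoc]
    rw [compat, associator_naturality_left_assoc, ← whisker_exchange_assoc, ha]
  rw [hL, hR]
  monoidal

/-- The pair induced by any `g : X ⟶ Mo` is an `𝕄`-morphism. -/
lemma MM_induced {X : C} (g : X ⟶ Mo)
    (compat : (e₂ ▷ A) ≫ m = (α_ A Mo A).hom ≫ (A ◁ e₁) ≫ m) :
    (((A ◁ g) ≫ e₂) ▷ A) ≫ m = (α_ A X A).hom ≫ (A ◁ ((g ▷ A) ≫ e₁)) ≫ m := by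
  simp only [comp_whiskerRight, assoc, MonoidalCategory.whiskerLeft_comp]
  rw [compat, associator_naturality_middle_assoc]

end Aux

/-- Lemma 3.5: for a non-degenerate semigroup `A`, the canonical morphism
`i : A ⟶ 𝕄(A)` (corresponding to the `𝕄`-morphism `(m, m)`) satisfies
`i ∘ e₁ = m_{𝕄(A)} ∘ (1 ⊗ i)` and `i ∘ e₂ = m_{𝕄(A)} ∘ (i ⊗ 1)`. -/
theorem canonical_into_multiplierMonoid [BraidedCategory C] [MonoidalClosed C]
    {A : C} (m : A ⊗ A ⟶ A) (hassoc : SgAssoc A m) (hnd : NonDeg A m)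
    (M : MultiplierMonoid A m) (mM : M.M ⊗ M.M ⟶ M.M)
    (h1 : (mM ▷ A) ≫ M.e₁ = (α_ M.M M.M A).hom ≫ (M.M ◁ M.e₁) ≫ M.e₁)
    (h2 : (A ◁ mM) ≫ M.e₂ = (α_ A M.M M.M).inv ≫ (M.e₂ ▷ M.M) ≫ M.e₂)
    (i : A ⟶ M.M) (hi₁ : m = (i ▷ A) ≫ M.e₁) (hi₂ : m = (A ◁ i) ≫ M.e₂) :
    M.e₁ ≫ i = (M.M ◁ i) ≫ mM ∧ M.e₂ ≫ i = (i ▷ M.M) ≫ mM := by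
  have ha : (m ▷ A) ≫ m = (α_ A A A).hom ≫ (A ◁ m) ≫ m := hassoc
  have compat : (M.e₂ ▷ A) ≫ m = (α_ A M.M A).hom ≫ (A ◁ M.e₁) ≫ m := M.compat
  have compat' : (A ◁ M.e₁) ≫ m = (α_ A M.M A).inv ≫ (M.e₂ ▷ A) ≫ m := by
    rw [compat, Iso.inv_hom_id_assoc]
  have fact1 := MM_fact1 hnd ha compat
  have fact2 := MM_fact2 hnd ha compat
  constructor
  · -- first equation, morphisms `M.M ⊗ A ⟶ M.M`
    obtain ⟨f, -, huniq⟩ := M.lift (((M.e₁ ≫ i) ▷ A) ≫ M.e₁) ((A ◁ (M.e₁ ≫ i)) ≫ M.e₂)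
      (MM_induced (M.e₁ ≫ i) compat)
    have hP : M.e₁ ≫ i = f := huniq _ ⟨rfl, rfl⟩
    have eqA : ((M.e₁ ≫ i) ▷ A) ≫ M.e₁ = (((M.M ◁ i) ≫ mM) ▷ A) ≫ M.e₁ := by
      simp only [comp_whiskerRight, assoc]
      rw [← hi₁, h1, associator_naturality_middle_assoc,
        ← MonoidalCategory.whiskerLeft_comp_assoc, ← hi₁, ← fact1]
    have eqB : (A ◁ (M.e₁ ≫ i)) ≫ M.e₂ = (A ◁ ((M.M ◁ i) ≫ mM)) ≫ M.e₂ := by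
      simp only [MonoidalCategory.whiskerLeft_comp, assoc]
      rw [← hi₂, h2, associator_inv_naturality_right_assoc, whisker_exchange_assoc,
        ← hi₂, compat']
    have hQ : (M.M ◁ i) ≫ mM = f := huniq _ ⟨eqA, eqB⟩
    rw [hP, hQ]
  · -- second equation, morphisms `A ⊗ M.M ⟶ M.M`
    obtain ⟨f, -, huniq⟩ := M.lift (((M.e₂ ≫ i) ▷ A) ≫ M.e₁) ((A ◁ (M.e₂ ≫ i)) ≫ M.e₂)
      (MM_induced (M.e₂ ≫ i) compat)
    have hP : M.e₂ ≫ i = f := huniq _ ⟨rfl, rfl⟩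
    have eqC : ((M.e₂ ≫ i) ▷ A) ≫ M.e₁ = (((i ▷ M.M) ≫ mM) ▷ A) ≫ M.e₁ := by
      simp only [comp_whiskerRight, assoc]
      rw [← hi₁, h1, associator_naturality_left_assoc, ← whisker_exchange_assoc,
        ← hi₁, compat]
    have eqD : (A ◁ (M.e₂ ≫ i)) ≫ M.e₂ = (A ◁ ((i ▷ M.M) ≫ mM)) ≫ M.e₂ := by
      simp only [MonoidalCategory.whiskerLeft_comp, assoc]
      rw [← hi₂, h2, associator_inv_naturality_middle_assoc,
        ← comp_whiskerRight_assoc, ← hi₂, ← fact2]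
    have hQ : (i ▷ M.M) ≫ mM = f := huniq _ ⟨eqC, eqD⟩
    rw [hP, hQ]
end
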